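/- arXiv:1602.00875 — 5 statements merged into one kernel-verified Lean document; each statement's English description precedes it below -/
import Mathlib

section
/- Let P and Q be probability mass functions on a common finite alphabet X, let W(y|x) be a channel from X to {0,1}, and suppose d_TV(P,Q) ≤ δ with δ ≤ 1. Then the mutual informations satisfy |I_P(X;Y) - I_Q(X;Y)| ≤ δ log(4/δ), where I_P(X;Y) is the mutual information when X has distribution P and Y is obtained by passing X through W. -/
/-!
Write `h` for the binary entropy, `w x = W(true | x)`, `a = ∑ P w` and `b = ∑ Q w`, so that
`I_P - I_Q = h a - h b + ∑ (Q - P) h(w)`. The positive and negative parts of `P - Q` both have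
mass `t = d_TV(P, Q) ≤ δ`; by concavity of `h` the second term is at most `t h(s)`, where `s` is
the `(P - Q)⁻`-average of `w`, and the same decomposition gives `|a - b| ≤ t max(s, 1 - s)`.
This coupling is what makes the bound work: a large output shift forces `s` towards `0` or `1`
and hence `h(s)` to be small. For `t ≤ 1/2` the resulting one-variable inequality
`h a - h b + t h s ≤ t log (4 / t)` follows from `h a - h b ≤ -d log d + d` with `d = |a - b|`;
for `t > 1/2` the crude bound `h ≤ log 2` suffices. Finally, `t log (4 / t)` is increasing on
`[0, 1]`.
-/

open Finset

namespace Real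

lemma negMulLog_sub_negMulLog_le {x y : ℝ} (hx : 0 ≤ x) (hxy : x ≤ y) (hy : y ≤ 1) :
    negMulLog x - negMulLog y ≤ y - x := by
  rcases hx.eq_or_lt with rfl | hx
  · have := negMulLog_nonneg hxy hy
    simp only [negMulLog_zero, zero_sub, sub_zero]
    linarith
  have hy0 : 0 < y := hx.trans_le hxy
  -- `-x log x + y log y = x log (y/x) + (y - x) log y`
  have hxlog : x * (log y - log x) ≤ y - x := by
    calc x * (log y - log x) = x * log (y / x) := by rw [log_div hy0.ne' hx.ne']
      _ ≤ x * (y / x - 1) := mul_le_mul_of_nonneg_left (log_le_sub_one_of_pos (by positivity)) hx.le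
      _ = y - x := by field_simp
  have hylog : (y - x) * log y ≤ 0 :=
    mul_nonpos_of_nonneg_of_nonpos (by linarith) (log_nonpos hy0.le hy)
  simp only [negMulLog]
  linarith

lemma negMulLog_add_le {x y : ℝ} (hx : 0 ≤ x) (hy : 0 ≤ y) :
    negMulLog (x + y) ≤ negMulLog x + negMulLog y := by
  rcases hx.eq_or_lt with rfl | hx
  · simp
  rcases hy.eq_or_lt with rfl | hy
  · simp
  have hxs : x * log x ≤ x * log (x + y) :=
    mul_le_mul_of_nonneg_left (log_le_log hx (by linarith)) hx.le
  have hys : y * log y ≤ y * log (x + y) :=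
    mul_le_mul_of_nonneg_left (log_le_log hy (by linarith)) hy.le
  simp only [negMulLog, neg_mul, add_mul]
  linarith

lemma binEntropy_sub_binEntropy_le {a b : ℝ} (ha₀ : 0 ≤ a) (ha₁ : a ≤ 1) (hb₀ : 0 ≤ b)
    (hb₁ : b ≤ 1) : binEntropy a - binEntropy b ≤ negMulLog |a - b| + |a - b| := by
  wlog hba : b ≤ a generalizing a b
  · simpa [abs_sub_comm a b] using
      this (a := 1 - a) (b := 1 - b) (by linarith) (by linarith) (by linarith) (by linarith)
        (by linarith)
  rw [abs_of_nonneg (sub_nonneg.2 hba), binEntropy_eq_negMulLog_add_negMulLog_one_sub,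
    binEntropy_eq_negMulLog_add_negMulLog_one_sub]
  have h₁ : negMulLog a ≤ negMulLog b + negMulLog (a - b) := by
    simpa using negMulLog_add_le hb₀ (sub_nonneg.2 hba)
  have h₂ := negMulLog_sub_negMulLog_le (x := 1 - a) (y := 1 - b) (by linarith) (by linarith)
    (by linarith)
  linarith

lemma negMulLog_le_one_sub_sq_div_two {x : ℝ} (hx₀ : 0 ≤ x) (hx₁ : x ≤ 1) :
    negMulLog x ≤ (1 - x ^ 2) / 2 := by
  rcases hx₀.eq_or_lt with rfl | hx
  · norm_num
  -- `u ≤ sinh u` at `u = -log x`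
  have hsinh : -log x ≤ (x⁻¹ - x) / 2 := by
    have hu : 0 ≤ -log x := neg_nonneg.2 (log_nonpos hx.le hx₁)
    have := self_le_sinh_iff.2 hu
    rwa [sinh_eq, neg_neg, exp_log hx, exp_neg, exp_log hx] at this
  have := mul_le_mul_of_nonneg_left hsinh hx.le
  rw [negMulLog, neg_mul, ← mul_neg]
  calc x * -log x ≤ x * ((x⁻¹ - x) / 2) := this
    _ = (1 - x ^ 2) / 2 := by field_simp

lemma add_negMulLog_add_binEntropy_le {m : ℝ} (hm₀ : 1 / 2 ≤ m) (hm₁ : m ≤ 1) :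
    m + negMulLog m + binEntropy m ≤ (3 - m) * log 2 := by
  have h₁ := negMulLog_le_one_sub_sq_div_two (by linarith) hm₁
  have h₂ := negMulLog_le_one_sub_sq_div_two (x := 2 * (1 - m)) (by linarith) (by linarith)
  have h₃ : negMulLog (1 - m) = (1 - m) * log 2 + negMulLog (2 * (1 - m)) / 2 := by
    rw [negMulLog_mul]; simp only [negMulLog]; ring
  have := log_two_gt_d9
  rw [binEntropy_eq_negMulLog_add_negMulLog_one_sub, h₃]
  nlinarith [sq_nonneg (m - 3 / 4)]

lemma one_sub_mul_log_two_le_negMulLog {t : ℝ} (ht₀ : 1 / 2 ≤ t) (ht₁ : t ≤ 1) :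
    (1 - t) * log 2 ≤ negMulLog t := by
  have := concaveOn_negMulLog.2 (show (1 / 2 : ℝ) ∈ Set.Ici 0 by norm_num)
    (show (1 : ℝ) ∈ Set.Ici 0 by norm_num) (show 0 ≤ 2 * (1 - t) by linarith)
    (show 0 ≤ 2 * t - 1 by linarith) (by ring)
  have hhalf : negMulLog (1 / 2) = log 2 / 2 := by simp [negMulLog]; ring
  simp only [smul_eq_mul, hhalf, negMulLog_one] at this
  rw [show 2 * (1 - t) * (1 / 2) + (2 * t - 1) * 1 = t by ring] at this
  linarith

lemma mul_log_four_div (t : ℝ) : t * log (4 / t) = 2 * log 2 * t + negMulLog t := by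
  rcases eq_or_ne t 0 with rfl | ht
  · simp
  rw [log_div (by norm_num) ht, show (4 : ℝ) = 2 ^ 2 by norm_num, log_pow, negMulLog]
  push_cast; ring

lemma monotoneOn_mul_log_four_div : MonotoneOn (fun t ↦ t * log (4 / t)) (Set.Icc 0 1) := by
  intro s hs t ht hst
  have := negMulLog_sub_negMulLog_le hs.1 hst ht.2
  have := log_two_gt_d9
  simp only [mul_log_four_div]
  nlinarith

lemma binEntropy_sub_add_mul_binEntropy_le {a b s t : ℝ} (ha₀ : 0 ≤ a) (ha₁ : a ≤ 1)
    (hb₀ : 0 ≤ b) (hb₁ : b ≤ 1) (hs₀ : 0 ≤ s) (hs₁ : s ≤ 1) (ht₀ : 0 ≤ t) (ht₁ : t ≤ 1)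
    (hab : |a - b| ≤ t * max s (1 - s)) :
    binEntropy a - binEntropy b + t * binEntropy s ≤ t * log (4 / t) := by
  rw [mul_log_four_div]
  rcases le_or_gt t (1 / 2) with ht | ht
  · set m := max s (1 - s)
    have hsm : binEntropy s = binEntropy m := by
      rcases max_choice s (1 - s) with h | h <;> simp [m, h]
    have hm₀ : 1 / 2 ≤ m := by
      rcases le_total s (1 / 2) with h | h
      · exact le_max_of_le_right (by linarith)
      · exact le_max_of_le_left h
    have hm₁ : m ≤ 1 := max_le hs₁ (by linarith)
    have htlog : t * log 2 ≤ negMulLog t := by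
      rcases ht₀.eq_or_lt with rfl | ht₀
      · simp
      have : log t ≤ -log 2 := by
        rw [← log_inv]; exact log_le_log ht₀ (by linarith)
      rw [negMulLog]; nlinarith
    calc binEntropy a - binEntropy b + t * binEntropy s
        ≤ negMulLog (t * m) + t * m + t * binEntropy m := by
          have := negMulLog_sub_negMulLog_le (abs_nonneg _) hab (by nlinarith)
          rw [hsm]
          linarith [binEntropy_sub_binEntropy_le ha₀ ha₁ hb₀ hb₁]
      _ = m * negMulLog t + t * (m + negMulLog m + binEntropy m) := by
          rw [negMulLog_mul]; ring
      _ ≤ m * negMulLog t + t * ((3 - m) * log 2) := by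
          gcongr; exact add_negMulLog_add_binEntropy_le hm₀ hm₁
      _ ≤ 2 * log 2 * t + negMulLog t := by nlinarith
  · have := one_sub_mul_log_two_le_negMulLog ht.le ht₁
    have := mul_le_mul_of_nonneg_left (binEntropy_le_log_two (p := s)) ht₀
    linarith [binEntropy_le_log_two (p := a), binEntropy_nonneg hb₀ hb₁]

end Real

open Real

theorem ConcaveOn.sum_mul_le_sum_mul_map_div {ι 𝕜 : Type*} [Field 𝕜] [LinearOrder 𝕜]
    [IsStrictOrderedRing 𝕜] {s : Set 𝕜} {f : 𝕜 → 𝕜} (hf : ConcaveOn 𝕜 s f) {t : Finset ι}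
    {w p : ι → 𝕜} (hw : ∀ i ∈ t, 0 ≤ w i)
    (hp : ∀ i ∈ t, p i ∈ s) :
    ∑ i ∈ t, w i * f (p i) ≤ (∑ i ∈ t, w i) * f ((∑ i ∈ t, w i * p i) / ∑ i ∈ t, w i) := by
  rcases (sum_nonneg hw).eq_or_lt with h | h
  · have hw0 := (sum_eq_zero_iff_of_nonneg hw).1 h.symm
    rw [← h, zero_mul]
    exact (sum_eq_zero fun i hi ↦ by rw [hw0 i hi, zero_mul]).le
  · have := hf.le_map_centerMass hw h hp
    simp only [centerMass, smul_eq_mul, Function.comp_apply, inv_mul_eq_div] at this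
    rwa [div_le_iff₀' h] at this

section
variable {α : Type*} [Fintype α]

lemma sum_posPart_sub_eq_sum_negPart_sub {P Q : α → ℝ} (h : ∑ x, P x = ∑ x, Q x) :
    ∑ x, (P x - Q x)⁺ = ∑ x, (P x - Q x)⁻ := by
  rw [← sub_eq_zero, ← sum_sub_distrib]
  simp only [posPart_sub_negPart]
  rw [sum_sub_distrib, h, sub_self]

lemma sum_abs_sub_eq_two_mul_sum_negPart_sub {P Q : α → ℝ} (h : ∑ x, P x = ∑ x, Q x) :
    ∑ x, |P x - Q x| = 2 * ∑ x, (P x - Q x)⁻ := by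
  simp only [← posPart_add_negPart, sum_add_distrib, sum_posPart_sub_eq_sum_negPart_sub h]
  ring

lemma abs_sum_mul_sub_sum_mul_le {P Q w : α → ℝ} (h : ∑ x, P x = ∑ x, Q x)
    (hw₀ : ∀ x, 0 ≤ w x) (hw₁ : ∀ x, w x ≤ 1) :
    |∑ x, P x * w x - ∑ x, Q x * w x|
      ≤ max (∑ x, (P x - Q x)⁻ * w x) (∑ x, (P x - Q x)⁻ - ∑ x, (P x - Q x)⁻ * w x) := by
  have hsplit : ∑ x, P x * w x - ∑ x, Q x * w x
      = ∑ x, (P x - Q x)⁺ * w x - ∑ x, (P x - Q x)⁻ * w x := by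
    simp only [← sum_sub_distrib, ← sub_mul, posPart_sub_negPart]
  have hpos₀ : 0 ≤ ∑ x, (P x - Q x)⁺ * w x :=
    sum_nonneg fun x _ ↦ mul_nonneg (posPart_nonneg _) (hw₀ x)
  have hpos₁ : ∑ x, (P x - Q x)⁺ * w x ≤ ∑ x, (P x - Q x)⁺ :=
    sum_le_sum fun x _ ↦ mul_le_of_le_one_right (posPart_nonneg _) (hw₁ x)
  rw [sum_posPart_sub_eq_sum_negPart_sub h] at hpos₁
  set t := ∑ x, (P x - Q x)⁻
  set u := ∑ x, (P x - Q x)⁻ * w x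
  rw [hsplit, abs_le]
  constructor <;> linarith [le_max_left u (t - u), le_max_right u (t - u)]

lemma sum_mul_mem_Icc {P w : α → ℝ} (hP₀ : ∀ x, 0 ≤ P x) (hP₁ : ∑ x, P x = 1)
    (hw₀ : ∀ x, 0 ≤ w x) (hw₁ : ∀ x, w x ≤ 1) : ∑ x, P x * w x ∈ Set.Icc 0 1 :=
  ⟨sum_nonneg fun x _ ↦ mul_nonneg (hP₀ x) (hw₀ x),
    hP₁ ▸ sum_le_sum fun x _ ↦ mul_le_of_le_one_right (hP₀ x) (hw₁ x)⟩

lemma sum_mul_binEntropy_sub_sum_mul_binEntropy_le {P Q w : α → ℝ} (hw₀ : ∀ x, 0 ≤ w x)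
    (hw₁ : ∀ x, w x ≤ 1) :
    ∑ x, Q x * binEntropy (w x) - ∑ x, P x * binEntropy (w x)
      ≤ (∑ x, (P x - Q x)⁻) * binEntropy ((∑ x, (P x - Q x)⁻ * w x) / ∑ x, (P x - Q x)⁻) :=
  calc ∑ x, Q x * binEntropy (w x) - ∑ x, P x * binEntropy (w x)
      = ∑ x, (P x - Q x)⁻ * binEntropy (w x) - ∑ x, (P x - Q x)⁺ * binEntropy (w x) := by
        simp only [← sum_sub_distrib]
        exact sum_congr rfl fun x _ ↦ by
          linear_combination binEntropy (w x) * posPart_sub_negPart (P x - Q x)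
    _ ≤ ∑ x, (P x - Q x)⁻ * binEntropy (w x) :=
        sub_le_self _ <| sum_nonneg fun x _ ↦
          mul_nonneg (posPart_nonneg _) (binEntropy_nonneg (hw₀ x) (hw₁ x))
    _ ≤ _ := strictConcave_binEntropy.concaveOn.sum_mul_le_sum_mul_map_div
        (fun x _ ↦ negPart_nonneg _) fun x _ ↦ ⟨hw₀ x, hw₁ x⟩

noncomputable def binaryMutualInfo (P w : α → ℝ) : ℝ :=
  binEntropy (∑ x, P x * w x) - ∑ x, P x * binEntropy (w x)

noncomputable def mutualInfo {β : Type*} [Fintype β] (P : α → ℝ) (W : α → β → ℝ) : ℝ :=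
  (∑ y, negMulLog (∑ x, P x * W x y)) - ∑ x, P x * ∑ y, negMulLog (W x y)

lemma mutualInfo_bool {P : α → ℝ} {W : α → Bool → ℝ} (hP₁ : ∑ x, P x = 1)
    (hW₁ : ∀ x, ∑ y, W x y = 1) : mutualInfo P W = binaryMutualInfo P (W · true) := by
  have hW : ∀ x, W x false = 1 - W x true := fun x ↦ by
    linarith [Fintype.sum_bool (W x) ▸ hW₁ x]
  have hPW : ∑ x, P x * (1 - W x true) = 1 - ∑ x, P x * W x true := by
    simp only [mul_sub, mul_one, sum_sub_distrib, hP₁]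
  simp only [mutualInfo, binaryMutualInfo, Fintype.sum_bool, hW, hPW,
    binEntropy_eq_negMulLog_add_negMulLog_one_sub]

theorem binaryMutualInfo_sub_le {P Q w : α → ℝ} {δ : ℝ} (hP₀ : ∀ x, 0 ≤ P x)
    (hP₁ : ∑ x, P x = 1) (hQ₀ : ∀ x, 0 ≤ Q x) (hQ₁ : ∑ x, Q x = 1) (hw₀ : ∀ x, 0 ≤ w x)
    (hw₁ : ∀ x, w x ≤ 1) (hδ₁ : δ ≤ 1) (htv : (1 / 2) * ∑ x, |P x - Q x| ≤ δ) :
    binaryMutualInfo P w - binaryMutualInfo Q w ≤ δ * log (4 / δ) := by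
  set t := ∑ x, (P x - Q x)⁻
  set u := ∑ x, (P x - Q x)⁻ * w x
  have hPQ : ∑ x, P x = ∑ x, Q x := hP₁.trans hQ₁.symm
  have ht₀ : 0 ≤ t := sum_nonneg fun x _ ↦ negPart_nonneg _
  have htδ : t ≤ δ := by
    rw [sum_abs_sub_eq_two_mul_sum_negPart_sub hPQ] at htv; linarith
  have hu₀ : 0 ≤ u := sum_nonneg fun x _ ↦ mul_nonneg (negPart_nonneg _) (hw₀ x)
  have hut : u ≤ t := sum_le_sum fun x _ ↦ mul_le_of_le_one_right (negPart_nonneg _) (hw₁ x)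
  have hab : |∑ x, P x * w x - ∑ x, Q x * w x| ≤ t * max (u / t) (1 - u / t) := by
    rw [mul_max_of_nonneg _ _ ht₀, mul_one_sub, mul_div_cancel_of_imp' fun h ↦ by linarith]
    exact abs_sum_mul_sub_sum_mul_le hPQ hw₀ hw₁
  have ha := sum_mul_mem_Icc hP₀ hP₁ hw₀ hw₁
  have hb := sum_mul_mem_Icc hQ₀ hQ₁ hw₀ hw₁
  calc binaryMutualInfo P w - binaryMutualInfo Q w
      = binEntropy (∑ x, P x * w x) - binEntropy (∑ x, Q x * w x)
          + (∑ x, Q x * binEntropy (w x) - ∑ x, P x * binEntropy (w x)) := by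
        unfold binaryMutualInfo; ring
    _ ≤ binEntropy (∑ x, P x * w x) - binEntropy (∑ x, Q x * w x) + t * binEntropy (u / t) := by
        gcongr; exact sum_mul_binEntropy_sub_sum_mul_binEntropy_le hw₀ hw₁
    _ ≤ t * log (4 / t) :=
        binEntropy_sub_add_mul_binEntropy_le ha.1 ha.2 hb.1 hb.2 (div_nonneg hu₀ ht₀)
          (div_le_one_of_le₀ hut ht₀) ht₀ (htδ.trans hδ₁) hab
    _ ≤ δ * log (4 / δ) :=
        monotoneOn_mul_log_four_div ⟨ht₀, htδ.trans hδ₁⟩ ⟨ht₀.trans htδ, hδ₁⟩ htδ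

end

theorem mutual_info_diff_le_tv_general
    {α : Type*} [Fintype α]
    (P Q : α → ℝ) (W : α → Bool → ℝ) (δ : ℝ)
    (hP0 : ∀ x, 0 ≤ P x) (hP1 : ∑ x, P x = 1)
    (hQ0 : ∀ x, 0 ≤ Q x) (hQ1 : ∑ x, Q x = 1)
    (hW0 : ∀ x y, 0 ≤ W x y) (hW1 : ∀ x, ∑ y, W x y = 1)
    (hδ1 : δ ≤ 1)
    (htv : (1 / 2) * ∑ x, |P x - Q x| ≤ δ) :
    |((∑ y, Real.negMulLog (∑ x, P x * W x y))
        - ∑ x, P x * ∑ y, Real.negMulLog (W x y))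
      - ((∑ y, Real.negMulLog (∑ x, Q x * W x y))
        - ∑ x, Q x * ∑ y, Real.negMulLog (W x y))|
      ≤ δ * Real.log (4 / δ) := by
  change |mutualInfo P W - mutualInfo Q W| ≤ _
  have hw₀ : ∀ x, 0 ≤ W x true := fun x ↦ hW0 x true
  have hw₁ : ∀ x, W x true ≤ 1 := fun x ↦ by
    linarith [hW0 x false, Fintype.sum_bool (W x) ▸ hW1 x]
  have htv' : (1 / 2) * ∑ x, |Q x - P x| ≤ δ := by simpa only [abs_sub_comm] using htv
  rw [mutualInfo_bool hP1 hW1, mutualInfo_bool hQ1 hW1, abs_sub_le_iff]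
  exact ⟨binaryMutualInfo_sub_le hP0 hP1 hQ0 hQ1 hw₀ hw₁ hδ1 htv,
    binaryMutualInfo_sub_le hQ0 hQ1 hP0 hP1 hw₀ hw₁ hδ1 htv'⟩

theorem mutual_info_diff_le_tv
    {α : Type*} [Fintype α]
    (P Q : α → ℝ) (W : α → Bool → ℝ) (δ : ℝ)
    (hP0 : ∀ x, 0 ≤ P x) (hP1 : ∑ x, P x = 1)
    (hQ0 : ∀ x, 0 ≤ Q x) (hQ1 : ∑ x, Q x = 1)
    (hW0 : ∀ x y, 0 ≤ W x y) (hW1 : ∀ x, ∑ y, W x y = 1)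
    (hδ0 : 0 < δ) (hδ1 : δ ≤ 1)
    (htv : (1 / 2) * ∑ x, |P x - Q x| ≤ δ) :
    |((∑ y, Real.negMulLog (∑ x, P x * W x y))
        - ∑ x, P x * ∑ y, Real.negMulLog (W x y))
      - ((∑ y, Real.negMulLog (∑ x, Q x * W x y))
        - ∑ x, Q x * ∑ y, Real.negMulLog (W x y))|
      ≤ δ * Real.log (4 / δ) :=
  mutual_info_diff_le_tv_general P Q W δ hP0 hP1 hQ0 hQ1 hW0 hW1 hδ1 htv
end

section
/- The total variation distance between the Hypergeometric(k, m, p) distribution (sampling k items without replacement from a population of p items of which m are special, counting the special ones drawn) and the Binomial(k, m/p) distribution is at most (k-1)/(p-1). -/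
/-!
Stein's method for the binomial law (Ehm). Write `q = m / p`. For `A ⊆ {0, …, k}` the Stein
equation `(k - i) q f (i + 1) - i (1 - q) f i = 1_A(i) - Bin(A)` has an explicit solution, built
from the binomial distribution function, whose increments satisfy `Δf ≤ 1 / (k q (1 - q))`. The
hypergeometric law satisfies its own Stein identity
`E[(k - X) m f (X + 1) - X (p - m) f X] = E[X (k - X) Δf X]`, so evaluating the binomial Stein
equation against it gives `Hyp(A) - Bin(A) = E[X (k - X) Δf X] / p`. With the moment
`E[X (k - X)] = k (k - 1) m (p - m) / (p² (p - 1))` this is at most `(k - 1) / (p - 1)`.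
-/

open Finset

namespace HypergeometricBinomial

noncomputable def binom (q : ℝ) (k i : ℕ) : ℝ := k.choose i * q ^ i * (1 - q) ^ (k - i)

/-- `binomCdf q k i = P(X < i)` for `X ~ Bin(k, q)` (strict inequality). -/
noncomputable def binomCdf (q : ℝ) (k i : ℕ) : ℝ := ∑ l ∈ range i, binom q k l

section Binomial

variable {q : ℝ} {k : ℕ}

lemma binom_nonneg (hq0 : 0 ≤ q) (hq1 : q ≤ 1) (i : ℕ) : 0 ≤ binom q k i := by
  have : 0 ≤ 1 - q := by linarith
  unfold binom
  positivity

lemma binom_pos (hq0 : 0 < q) (hq1 : q < 1) {i : ℕ} (hi : i ≤ k) : 0 < binom q k i := by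
  have : 0 < 1 - q := by linarith
  have := Nat.choose_pos hi
  unfold binom
  positivity

lemma binom_of_lt {i : ℕ} (h : k < i) : binom q k i = 0 := by
  simp [binom, Nat.choose_eq_zero_of_lt h]

variable (q k)

lemma sum_binom : ∑ i ∈ range (k + 1), binom q k i = 1 := by
  calc ∑ i ∈ range (k + 1), binom q k i = (q + (1 - q)) ^ k := by
        rw [add_pow]; exact sum_congr rfl fun _ _ => by rw [binom]; ring
    _ = 1 := by simp

lemma binomCdf_succ (i : ℕ) : binomCdf q k (i + 1) = binomCdf q k i + binom q k i :=
  sum_range_succ _ _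

lemma binomCdf_add_sum_Ico {i : ℕ} (hi : i ≤ k + 1) :
    binomCdf q k i + ∑ l ∈ Ico i (k + 1), binom q k l = 1 := by
  rw [binomCdf, sum_range_add_sum_Ico _ hi, sum_binom]

lemma succ_mul_binom_succ (i : ℕ) :
    (i + 1) * (1 - q) * binom q k (i + 1) = (k - i) * q * binom q k i := by
  rcases lt_or_ge i k with hik | hki
  · have hc : ((k.choose (i + 1) * (i + 1) : ℕ) : ℝ) = ((k.choose i * (k - i) : ℕ) : ℝ) := by
      rw [Nat.choose_succ_right_eq]
    have hk : k - i = k - (i + 1) + 1 := by omega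
    push_cast [Nat.cast_sub hik.le] at hc
    rw [binom, binom, hk]
    linear_combination (q ^ i * q * (1 - q) ^ (k - (i + 1)) * (1 - q)) * hc
  · rw [binom_of_lt (by omega : k < i + 1)]
    rcases hki.eq_or_lt with rfl | hlt
    · ring
    · rw [binom_of_lt hlt]; ring

lemma sum_range_sub_mul_binom (i : ℕ) :
    ∑ l ∈ range i, (k * q - l) * binom q k l = i * (1 - q) * binom q k i := by
  induction i with
  | zero => simp
  | succ i ih =>
    rw [sum_range_succ, ih]
    push_cast
    linear_combination (-1 : ℝ) * succ_mul_binom_succ q k i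

lemma sum_Ico_sub_mul_binom {i : ℕ} (hi : i ≤ k + 1) :
    ∑ l ∈ Ico i (k + 1), (l - k * q) * binom q k l = i * (1 - q) * binom q k i := by
  have htotal := sum_range_sub_mul_binom q k (k + 1)
  rw [binom_of_lt (Nat.lt_succ_self k), mul_zero, ← sum_range_add_sum_Ico _ hi,
    sum_range_sub_mul_binom] at htotal
  have hneg : ∑ l ∈ Ico i (k + 1), (l - k * q) * binom q k l
      = -∑ l ∈ Ico i (k + 1), (k * q - l) * binom q k l := by
    rw [← sum_neg_distrib]
    exact sum_congr rfl fun _ _ => by ring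
  linarith

variable {q k}

lemma sub_mul_binomCdf_le (hq0 : 0 ≤ q) (hq1 : q ≤ 1) (i : ℕ) :
    (k - i) * q * binomCdf q k i ≤ i * (1 - q) * binomCdf q k (i + 1) := by
  have hsplit : ∑ l ∈ range i, ((i : ℝ) - l) * binom q k l
      = (i - k * q) * binomCdf q k i + ∑ l ∈ range i, (k * q - l) * binom q k l := by
    rw [binomCdf, mul_sum, ← sum_add_distrib]
    exact sum_congr rfl fun _ _ => by ring
  have hnonneg : 0 ≤ ∑ l ∈ range i, ((i : ℝ) - l) * binom q k l :=
    sum_nonneg fun l hl => mul_nonneg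
      (sub_nonneg.2 (by exact_mod_cast (mem_range.1 hl).le)) (binom_nonneg hq0 hq1 l)
  rw [sum_range_sub_mul_binom] at hsplit
  rw [binomCdf_succ]
  linarith

lemma mul_one_sub_binomCdf_le (hq0 : 0 ≤ q) (hq1 : q ≤ 1) {i : ℕ} (hi : i ≤ k) :
    i * (1 - q) * (1 - binomCdf q k (i + 1)) ≤ (k - i) * q * (1 - binomCdf q k i) := by
  have hsplit : ∑ l ∈ Ico i (k + 1), ((l : ℝ) - i) * binom q k l
      = (k * q - i) * ∑ l ∈ Ico i (k + 1), binom q k l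
        + ∑ l ∈ Ico i (k + 1), (l - k * q) * binom q k l := by
    rw [mul_sum, ← sum_add_distrib]
    exact sum_congr rfl fun _ _ => by ring
  have hnonneg : 0 ≤ ∑ l ∈ Ico i (k + 1), ((l : ℝ) - i) * binom q k l :=
    sum_nonneg fun l hl => mul_nonneg
      (sub_nonneg.2 (by exact_mod_cast (mem_Ico.1 hl).1)) (binom_nonneg hq0 hq1 l)
  rw [sum_Ico_sub_mul_binom q k (by omega)] at hsplit
  have htail : ∑ l ∈ Ico i (k + 1), binom q k l = 1 - binomCdf q k i := by
    linarith [binomCdf_add_sum_Ico q k (i := i) (by omega)]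
  rw [htail] at hsplit
  rw [binomCdf_succ]
  linarith

lemma sub_mul_binomCdf_le_mul_binom (hq0 : 0 ≤ q) (hq1 : q ≤ 1) (i : ℕ) :
    (k * q - i) * binomCdf q k i ≤ i * (1 - q) * binom q k i := by
  rw [← sum_range_sub_mul_binom, binomCdf, mul_sum]
  refine sum_le_sum fun l hl => mul_le_mul_of_nonneg_right ?_ (binom_nonneg hq0 hq1 l)
  have : (l : ℝ) ≤ i := by exact_mod_cast (mem_range.1 hl).le
  linarith

lemma sub_mul_one_sub_binomCdf_le (hq0 : 0 ≤ q) (hq1 : q ≤ 1) {i : ℕ} (hi : i ≤ k) :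
    (i - k * q) * (1 - binomCdf q k (i + 1)) ≤ (k - i) * q * binom q k i := by
  have htail : 1 - binomCdf q k (i + 1) = ∑ l ∈ Ico (i + 1) (k + 1), binom q k l := by
    linarith [binomCdf_add_sum_Ico q k (i := i + 1) (by omega)]
  rw [← succ_mul_binom_succ, ← Nat.cast_succ, ← sum_Ico_sub_mul_binom q k (by omega), htail,
    mul_sum]
  refine sum_le_sum fun l hl => mul_le_mul_of_nonneg_right ?_ (binom_nonneg hq0 hq1 l)
  have : (i : ℝ) + 1 ≤ l := by exact_mod_cast (mem_Ico.1 hl).1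
  linarith

lemma binomCdf_tails_le (hq0 : 0 ≤ q) (hq1 : q ≤ 1) {i : ℕ} (hi : i ≤ k) :
    k * (1 - q) * i * (1 - binomCdf q k (i + 1)) + k * q * (k - i) * binomCdf q k i
      ≤ i * (k - i) := by
  have hmass : binomCdf q k i + binom q k i + (1 - binomCdf q k (i + 1)) = 1 := by
    rw [binomCdf_succ]; ring
  have hB := binom_nonneg (k := k) hq0 hq1 i
  have hlower : 0 ≤ binomCdf q k i := sum_nonneg fun l _ => binom_nonneg hq0 hq1 l
  have hupper : 0 ≤ 1 - binomCdf q k (i + 1) := by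
    rw [← binomCdf_add_sum_Ico q k (i := i + 1) (by omega), add_sub_cancel_left]
    exact sum_nonneg fun l _ => binom_nonneg hq0 hq1 l
  have hi0 : (0 : ℝ) ≤ i := by positivity
  have hki : (0 : ℝ) ≤ k - i := by rw [sub_nonneg]; exact_mod_cast hi
  rcases le_total (i : ℝ) (k * q) with hiq | hqi
  · have hupper' := mul_nonneg (mul_nonneg hi0 hupper) (sub_nonneg.2 hiq)
    have hB' := mul_nonneg (mul_nonneg (mul_nonneg hki hi0) hq0) hB
    linear_combination (k - i : ℝ) * sub_mul_binomCdf_le_mul_binom (k := k) hq0 hq1 i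
      + hupper' + hB' + (i * (k - i) : ℝ) * hmass
  · have hlower' := mul_nonneg (mul_nonneg hki hlower) (sub_nonneg.2 hqi)
    have hB' := mul_nonneg (mul_nonneg (mul_nonneg hi0 hki) (sub_nonneg.2 hq1)) hB
    linear_combination (i : ℝ) * sub_mul_one_sub_binomCdf_le (k := k) hq0 hq1 hi
      + hlower' + hB' + (i * (k - i) : ℝ) * hmass

end Binomial

/-- Solution `g = steinSol q k j` of the Stein equation of `Bin(k, q)` for the indicator of `{j}`:
`(k - i) q g (i + 1) - i (1 - q) g i = 1{i = j} - P(X = j)`. -/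
noncomputable def steinSol (q : ℝ) (k j i : ℕ) : ℝ :=
  binom q k j * ((if j < i then 1 else 0) - binomCdf q k i) / (i * (1 - q) * binom q k i)

section SteinSol

variable {q : ℝ} {k j i : ℕ}

lemma mul_steinSol (hq : q ≠ 1) :
    i * (1 - q) * steinSol q k j i
      = binom q k j * ((if j < i then 1 else 0) - binomCdf q k i) / binom q k i := by
  rcases Nat.eq_zero_or_pos i with rfl | hi0
  · simp [binomCdf]
  have : (i : ℝ) * (1 - q) ≠ 0 := mul_ne_zero (by positivity) (sub_ne_zero.2 hq.symm)
  rw [steinSol, mul_div_assoc', mul_div_mul_left _ _ this]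

lemma mul_steinSol_succ (hq : q ≠ 0) (hi : i ≤ k) (hj : j ≤ k) :
    (k - i) * q * steinSol q k j (i + 1)
      = binom q k j * ((if j < i + 1 then 1 else 0) - binomCdf q k (i + 1)) / binom q k i := by
  rcases hi.eq_or_lt with rfl | hik
  · rw [if_pos (by omega), binomCdf, sum_binom]
    simp
  have : (k - i : ℝ) * q ≠ 0 := mul_ne_zero (sub_ne_zero.2 (by exact_mod_cast hik.ne')) hq
  rw [steinSol, Nat.cast_succ, succ_mul_binom_succ, mul_div_assoc', mul_div_mul_left _ _ this]

lemma steinSol_stein_eq (hq0 : 0 < q) (hq1 : q < 1) (hi : i ≤ k) (hj : j ≤ k) :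
    (k - i) * q * steinSol q k j (i + 1) - i * (1 - q) * steinSol q k j i
      = (if i = j then 1 else 0) - binom q k j := by
  have hB := (binom_pos hq0 hq1 hi).ne'
  rw [mul_steinSol_succ hq0.ne' hi hj, mul_steinSol hq1.ne, binomCdf_succ]
  rcases lt_trichotomy j i with h | rfl | h
  · rw [if_pos (by omega), if_pos h, if_neg (by omega)]
    field_simp; ring
  · rw [if_pos (by omega), if_neg (by omega), if_pos rfl]
    field_simp; ring
  · rw [if_neg (by omega), if_neg (by omega), if_neg (by omega)]
    field_simp; ring

lemma steinSol_succ_le (hq0 : 0 < q) (hq1 : q < 1) (hi0 : 1 ≤ i) (hik : i < k) (hj : j ≤ k)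
    (hji : j ≠ i) : steinSol q k j (i + 1) ≤ steinSol q k j i := by
  have ha : (0 : ℝ) < (k - i) * q := mul_pos (sub_pos.2 (by exact_mod_cast hik)) hq0
  have hb : (0 : ℝ) < i * (1 - q) := mul_pos (by exact_mod_cast hi0) (by linarith)
  have hratio : 0 ≤ binom q k j / binom q k i :=
    div_nonneg (binom_nonneg hq0.le hq1.le j) (binom_nonneg hq0.le hq1.le i)
  suffices h : (i * (1 - q)) * ((k - i) * q * steinSol q k j (i + 1))
      ≤ ((k - i) * q) * (i * (1 - q) * steinSol q k j i) from
    le_of_mul_le_mul_left (by linear_combination h) (mul_pos ha hb)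
  rw [mul_steinSol_succ hq0.ne' hik.le hj, mul_steinSol hq1.ne, mul_div_right_comm,
    mul_div_right_comm (binom q k j)]
  suffices h : i * (1 - q) * ((if j < i + 1 then 1 else 0) - binomCdf q k (i + 1))
      ≤ (k - i) * q * ((if j < i then 1 else 0) - binomCdf q k i) by
    linear_combination mul_le_mul_of_nonneg_left h hratio
  rcases lt_or_gt_of_ne hji with h | h
  · rw [if_pos h, if_pos (by omega)]
    exact mul_one_sub_binomCdf_le hq0.le hq1.le hik.le
  · rw [if_neg (by omega), if_neg (by omega)]
    linear_combination sub_mul_binomCdf_le (k := k) hq0.le hq1.le i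

lemma steinSol_succ_sub_steinSol_le (hq0 : 0 < q) (hq1 : q < 1) (hi0 : 1 ≤ i) (hik : i < k) :
    steinSol q k i (i + 1) - steinSol q k i i ≤ 1 / (k * q * (1 - q)) := by
  have ha : (0 : ℝ) < (k - i) * q := mul_pos (sub_pos.2 (by exact_mod_cast hik)) hq0
  have hb : (0 : ℝ) < i * (1 - q) := mul_pos (by exact_mod_cast hi0) (by linarith)
  have hB := (binom_pos hq0 hq1 hik.le).ne'
  have hsucc : steinSol q k i (i + 1) = (1 - binomCdf q k (i + 1)) / ((k - i) * q) := by
    rw [eq_div_iff ha.ne', mul_comm, mul_steinSol_succ hq0.ne' hik.le hik.le, if_pos (by omega)]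
    field_simp
  have hself : steinSol q k i i = -binomCdf q k i / (i * (1 - q)) := by
    rw [eq_div_iff hb.ne', mul_comm, mul_steinSol hq1.ne, if_neg (lt_irrefl i), zero_sub]
    field_simp
  have hk : (0 : ℝ) < k * q * (1 - q) := by
    have : (0 : ℝ) < k := by exact_mod_cast (show 0 < k by omega)
    have : 0 < 1 - q := by linarith
    positivity
  rw [hsucc, hself, div_sub_div _ _ ha.ne' hb.ne', div_le_div_iff₀ (mul_pos ha hb) hk]
  linear_combination (q * (1 - q)) * binomCdf_tails_le (k := k) hq0.le hq1.le hik.le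

noncomputable def steinSolSet (q : ℝ) (k : ℕ) (A : Finset ℕ) (i : ℕ) : ℝ :=
  ∑ j ∈ A, steinSol q k j i

lemma steinSolSet_stein_eq (hq0 : 0 < q) (hq1 : q < 1) {A : Finset ℕ} (hA : A ⊆ range (k + 1))
    (hi : i ≤ k) :
    (k - i) * q * steinSolSet q k A (i + 1) - i * (1 - q) * steinSolSet q k A i
      = (if i ∈ A then 1 else 0) - ∑ j ∈ A, binom q k j := by
  simp only [steinSolSet, mul_sum, ← sum_sub_distrib]
  rw [sum_congr rfl fun j hj => steinSol_stein_eq hq0 hq1 hi (mem_range_succ_iff.1 (hA hj)),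
    sum_sub_distrib, sum_ite_eq]

lemma steinSolSet_succ_sub_le (hq0 : 0 < q) (hq1 : q < 1) {A : Finset ℕ}
    (hA : A ⊆ range (k + 1)) (hi0 : 1 ≤ i) (hik : i < k) :
    steinSolSet q k A (i + 1) - steinSolSet q k A i ≤ 1 / (k * q * (1 - q)) := by
  have hoff : ∀ j ∈ A, steinSol q k j (i + 1) - steinSol q k j i
      ≤ if i = j then steinSol q k j (i + 1) - steinSol q k j i else 0 := by
    intro j hj
    split_ifs with hij
    · exact le_rfl
    · exact sub_nonpos.2 <|
        steinSol_succ_le hq0 hq1 hi0 hik (mem_range_succ_iff.1 (hA hj)) (Ne.symm hij)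
  rw [steinSolSet, steinSolSet, ← sum_sub_distrib]
  refine (sum_le_sum hoff).trans ?_
  rw [sum_ite_eq]
  split_ifs
  · exact steinSol_succ_sub_steinSol_le hq0 hq1 hi0 hik
  · have : 0 < 1 - q := by linarith
    positivity

end SteinSol

noncomputable def hypergeom (p k m i : ℕ) : ℝ :=
  ((m.choose i * (p - m).choose (k - i) : ℕ) : ℝ) / (p.choose k : ℝ)

lemma cast_choose_mul_sub (n i : ℕ) :
    (n.choose i : ℝ) * (n - i) = n.choose (i + 1) * (i + 1) := by
  rcases le_or_gt i n with h | h
  · exact_mod_cast congrArg (Nat.cast (R := ℝ)) (Nat.choose_succ_right_eq n i).symm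
  · simp [Nat.choose_eq_zero_of_lt h, Nat.choose_eq_zero_of_lt (h.trans (Nat.lt_succ_self i))]

section Hypergeometric

variable {p k m : ℕ}

lemma hypergeom_nonneg (i : ℕ) : 0 ≤ hypergeom p k m i := by
  unfold hypergeom
  positivity

lemma sum_hypergeom (hk : k ≤ p) (hm : m ≤ p) : ∑ i ∈ range (k + 1), hypergeom p k m i = 1 := by
  have hvandermonde := Nat.add_choose_eq m (p - m) k
  rw [Nat.add_sub_cancel' hm, Nat.sum_antidiagonal_eq_sum_range_succ_mk] at hvandermonde
  unfold hypergeom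
  rw [← sum_div, ← Nat.cast_sum, ← hvandermonde, div_self]
  exact_mod_cast (Nat.choose_pos hk).ne'

lemma sub_mul_sub_mul_hypergeom (hm : m ≤ p) {i : ℕ} (hi : i < k) :
    ((k : ℝ) - i) * (m - i) * hypergeom p k m i
      = (i + 1) * (p - m - k + i + 1) * hypergeom p k m (i + 1) := by
  obtain ⟨r, rfl⟩ : ∃ r, k = i + 1 + r := ⟨k - (i + 1), by omega⟩
  have hleft := cast_choose_mul_sub m i
  have hright := cast_choose_mul_sub (p - m) r
  unfold hypergeom
  rw [show i + 1 + r - i = r + 1 by omega, show i + 1 + r - (i + 1) = r by omega]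
  push_cast [Nat.cast_sub hm] at hright ⊢
  rw [← mul_div_assoc, ← mul_div_assoc]
  congr 1
  linear_combination ((r + 1) * (p - m).choose (r + 1) : ℝ) * hleft
    - ((i + 1) * m.choose (i + 1) : ℝ) * hright

lemma sum_hypergeom_stein (hm : m ≤ p) (f : ℕ → ℝ) :
    ∑ i ∈ range (k + 1), hypergeom p k m i * ((k - i) * m * f (i + 1) - i * (p - m) * f i)
      = ∑ i ∈ range (k + 1), i * (k - i) * hypergeom p k m i * (f (i + 1) - f i) := by
  have htelescope : ∑ i ∈ range (k + 1), ((k : ℝ) - i) * (m - i) * hypergeom p k m i * f (i + 1)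
      = ∑ i ∈ range (k + 1), (i : ℝ) * (p - m - k + i) * hypergeom p k m i * f i := by
    rw [sum_range_succ, sum_range_succ']
    simp only [sub_self, zero_mul, add_zero, Nat.cast_zero]
    refine sum_congr rfl fun i hi => ?_
    rw [sub_mul_sub_mul_hypergeom hm (mem_range.1 hi)]
    push_cast
    ring
  rw [← sub_eq_zero, ← sum_sub_distrib, ← sub_eq_zero.2 htelescope, ← sum_sub_distrib]
  exact sum_congr rfl fun i _ => by ring

/-- Obtained from the Stein identity with `f = 1` and `f = id`. -/
lemma hypergeom_moment (hk : k ≤ p) (hm : m ≤ p) (hp : 0 < p) :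
    ((p : ℝ) - 1) * ∑ i ∈ range (k + 1), i * (k - i) * hypergeom p k m i
      = k * (k - 1) * m * (p - m) / p := by
  set c : ℝ := k * (k - 1) * m * (p - m) / p
  set α : ℝ := -(p * k - k * m + m) / p
  have hconst : ∑ i ∈ range (k + 1), hypergeom p k m i * ((k - i) * m - i * (p - m)) = 0 := by
    simpa using sum_hypergeom_stein (k := k) hm fun _ => 1
  have hlinear : ∑ i ∈ range (k + 1), hypergeom p k m i * ((k - i) * m * (i + 1) - i * (p - m) * i)
      = ∑ i ∈ range (k + 1), i * (k - i) * hypergeom p k m i := by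
    simpa using sum_hypergeom_stein (k := k) hm fun i => i
  have hpoly : ∀ i : ℕ, ((p : ℝ) - 1) * (i * (k - i) * hypergeom p k m i) - c * hypergeom p k m i
      = α * (hypergeom p k m i * ((k - i) * m - i * (p - m)))
        + (hypergeom p k m i * ((k - i) * m * (i + 1) - i * (p - m) * i)
          - i * (k - i) * hypergeom p k m i) := by
    intro i
    have : (p : ℝ) ≠ 0 := by positivity
    simp only [c, α]
    field_simp
    ring
  calc ((p : ℝ) - 1) * ∑ i ∈ range (k + 1), i * (k - i) * hypergeom p k m i
      = ∑ i ∈ range (k + 1), (((p : ℝ) - 1) * (i * (k - i) * hypergeom p k m i)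
          - c * hypergeom p k m i) + c * ∑ i ∈ range (k + 1), hypergeom p k m i := by
        rw [sum_sub_distrib, ← mul_sum, ← mul_sum]; ring
    _ = c := by
        rw [sum_congr rfl fun i _ => hpoly i, sum_add_distrib, sum_sub_distrib, ← mul_sum,
          hconst, hlinear, sum_hypergeom hk hm]
        ring

end Hypergeometric

lemma hypergeom_zero_right {p k : ℕ} (hk : k ≤ p) (i : ℕ) : hypergeom p k 0 i = binom 0 k i := by
  rcases Nat.eq_zero_or_pos i with rfl | hi
  · simp [hypergeom, binom, (Nat.choose_pos hk).ne']
  · simp [hypergeom, binom, Nat.choose_eq_zero_of_lt hi, hi.ne']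

lemma hypergeom_self_right {p k i : ℕ} (hk : k ≤ p) (hi : i ≤ k) :
    hypergeom p k p i = binom 1 k i := by
  rcases hi.eq_or_lt with rfl | hi
  · simp [hypergeom, binom, (Nat.choose_pos hk).ne']
  · have : 0 < k - i := by omega
    simp [hypergeom, binom, Nat.choose_eq_zero_of_lt this, this.ne']

section SteinBound

variable {p k m : ℕ} {A : Finset ℕ}

lemma sum_hypergeom_sub_binom_eq (hk : k ≤ p) (hm0 : 0 < m) (hmp : m < p)
    (hA : A ⊆ range (k + 1)) :
    ∑ i ∈ A, (hypergeom p k m i - binom (m / p) k i)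
      = 1 / p * ∑ i ∈ range (k + 1), i * (k - i) * hypergeom p k m i
          * (steinSolSet (m / p) k A (i + 1) - steinSolSet (m / p) k A i) := by
  have hp : (0 : ℝ) < p := by exact_mod_cast hm0.trans hmp
  have hq0 : (0 : ℝ) < m / p := by positivity
  have hq1 : (m : ℝ) / p < 1 := (div_lt_one hp).2 (by exact_mod_cast hmp)
  set f := steinSolSet (m / p) k A
  calc ∑ i ∈ A, (hypergeom p k m i - binom (m / p) k i)
      = ∑ i ∈ range (k + 1), hypergeom p k m i
          * ((if i ∈ A then 1 else 0) - ∑ j ∈ A, binom (m / p) k j) := by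
        simp only [mul_sub, sum_sub_distrib, ← sum_mul, sum_hypergeom hk hmp.le, one_mul,
          mul_ite, mul_one, mul_zero]
        rw [sum_ite_mem, inter_eq_right.2 hA]
    _ = ∑ i ∈ range (k + 1), hypergeom p k m i
          * ((k - i) * (m / p) * f (i + 1) - i * (1 - m / p) * f i) := by
        refine sum_congr rfl fun i hi => ?_
        rw [steinSolSet_stein_eq hq0 hq1 hA (mem_range_succ_iff.1 hi)]
    _ = 1 / p * ∑ i ∈ range (k + 1), hypergeom p k m i
          * ((k - i) * m * f (i + 1) - i * (p - m) * f i) := by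
        rw [mul_sum]
        refine sum_congr rfl fun i _ => ?_
        field_simp
    _ = _ := by rw [sum_hypergeom_stein hmp.le]

lemma sum_hypergeom_sub_binom_le (hk1 : 1 ≤ k) (hk : k ≤ p) (hm0 : 0 < m) (hmp : m < p)
    (hA : A ⊆ range (k + 1)) :
    ∑ i ∈ A, (hypergeom p k m i - binom (m / p) k i) ≤ ((k : ℝ) - 1) / ((p : ℝ) - 1) := by
  have hp : (0 : ℝ) < p := by exact_mod_cast hm0.trans hmp
  have hq0 : (0 : ℝ) < m / p := by positivity
  have hq1 : (m : ℝ) / p < 1 := (div_lt_one hp).2 (by exact_mod_cast hmp)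
  have hincrement : ∀ i ∈ range (k + 1), i * (k - i) * hypergeom p k m i
      * (steinSolSet (m / p) k A (i + 1) - steinSolSet (m / p) k A i)
      ≤ i * (k - i) * hypergeom p k m i * (1 / (k * (m / p) * (1 - m / p))) := by
    intro i hi
    have hik := mem_range_succ_iff.1 hi
    rcases Nat.eq_zero_or_pos i with rfl | hi0
    · simp
    rcases hik.eq_or_lt with rfl | hik
    · simp
    refine mul_le_mul_of_nonneg_left (steinSolSet_succ_sub_le hq0 hq1 hA hi0 hik) ?_
    have : (i : ℝ) ≤ k := by exact_mod_cast hik.le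
    have := hypergeom_nonneg (p := p) (k := k) (m := m) i
    have : (0 : ℝ) ≤ k - i := by linarith
    positivity
  have hmoment := hypergeom_moment hk hmp.le (by omega)
  rw [sum_hypergeom_sub_binom_eq hk hm0 hmp hA]
  calc _ ≤ 1 / p * ∑ i ∈ range (k + 1), i * (k - i) * hypergeom p k m i
          * (1 / (k * (m / p) * (1 - m / p))) :=
          mul_le_mul_of_nonneg_left (sum_le_sum hincrement) (by positivity)
    _ = ((k : ℝ) - 1) / ((p : ℝ) - 1) := by
        have hp1 : (p : ℝ) - 1 ≠ 0 := sub_ne_zero.2 (by exact_mod_cast (show p ≠ 1 by omega))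
        have hk0 : (k : ℝ) ≠ 0 := by exact_mod_cast (show k ≠ 0 by omega)
        have hm : (m : ℝ) ≠ 0 := by positivity
        have hpm : (p : ℝ) - m ≠ 0 := sub_ne_zero.2 (by exact_mod_cast hmp.ne')
        rw [← sum_mul]
        field_simp at hmoment ⊢
        linear_combination hmoment

end SteinBound

lemma half_sum_abs_le_of_forall_subset {ι : Type*} {s : Finset ι} {d : ι → ℝ} {c : ℝ}
    (hd : ∑ i ∈ s, d i = 0) (h : ∀ A ⊆ s, ∑ i ∈ A, d i ≤ c) : 1 / 2 * ∑ i ∈ s, |d i| ≤ c := by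
  classical
  have hsplit := sum_filter_add_sum_filter_not s (fun i => 0 ≤ d i) d
  have habs := sum_filter_add_sum_filter_not s (fun i => 0 ≤ d i) fun i => |d i|
  have hpos : ∑ i ∈ s with 0 ≤ d i, |d i| = ∑ i ∈ s with 0 ≤ d i, d i :=
    sum_congr rfl fun i hi => abs_of_nonneg (mem_filter.1 hi).2
  have hneg : ∑ i ∈ s with ¬0 ≤ d i, |d i| = -∑ i ∈ s with ¬0 ≤ d i, d i := by
    rw [← sum_neg_distrib]
    exact sum_congr rfl fun i hi => abs_of_neg (not_le.1 (mem_filter.1 hi).2)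
  have := h _ (filter_subset (fun i => 0 ≤ d i) s)
  linarith

end HypergeometricBinomial

open HypergeometricBinomial

theorem hypergeometric_binomial_tv
    (p k m : ℕ) (hk1 : 1 ≤ k) (hk : k ≤ p) (hm : m ≤ p) :
    (1 / 2) * ∑ i ∈ Finset.range (k + 1),
        |((m.choose i * (p - m).choose (k - i) : ℕ) : ℝ) / (p.choose k : ℝ)
          - (k.choose i : ℝ) * ((m : ℝ) / p) ^ i * (1 - (m : ℝ) / p) ^ (k - i)|
      ≤ ((k : ℝ) - 1) / ((p : ℝ) - 1) := by
  change 1 / 2 * ∑ i ∈ range (k + 1), |hypergeom p k m i - binom (m / p) k i| ≤ _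
  have hmass : ∑ i ∈ range (k + 1), (hypergeom p k m i - binom (m / p) k i) = 0 := by
    rw [sum_sub_distrib, sum_hypergeom hk hm, sum_binom, sub_self]
  refine half_sum_abs_le_of_forall_subset hmass fun A hA => ?_
  have hbound : (0 : ℝ) ≤ ((k : ℝ) - 1) / ((p : ℝ) - 1) := by
    have : (1 : ℝ) ≤ k := by exact_mod_cast hk1
    have : (1 : ℝ) ≤ p := by exact_mod_cast hk1.trans hk
    apply div_nonneg <;> linarith
  rcases Nat.eq_zero_or_pos m with rfl | hm0
  · simpa [hypergeom_zero_right hk] using hbound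
  rcases hm.lt_or_eq with hmp | rfl
  · exact sum_hypergeom_sub_binom_le hk1 hk hm0 hmp hA
  · have hp : (m : ℝ) ≠ 0 := by positivity
    rw [sum_congr rfl fun i hi => by
      rw [hypergeom_self_right hk (mem_range_succ_iff.1 (hA hi)), div_self hp, sub_self]]
    simpa using hbound
end

section
/- Let p1, p2 ∈ [0,1] with Δ = p1 - p2, and let η = Δ²·ℓ·(ℓ+2). Then the total variation distance between Binomial(ℓ, p1) and Binomial(ℓ, p2) satisfies d_TV ≤ c·√η·(1 + √(2η))·e^{2η}, where c = (2π)^{1/4}·e^{1/24}·2^{-1/2}. In particular, if η = O(1) then d_TV = O(√η) = O(|Δ|·ℓ). -/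
/-!
Splitting off the last trial gives `b(n+1, i+1; p) = (1 - p) b(n, i+1; p) + p b(n, i; p)`, so with
`d_i = b(n, i; p) - b(n, i; q)` the differences at level `n + 1` are
`(1 - p) d_{i+1} + p d_i + (q - p) (b(n, i+1; q) - b(n, i; q))`.
Summing absolute values, each additional trial increases the `ℓ¹` distance between `Bin(n, p)`
and `Bin(n, q)` by at most `2|p - q|`. Hence `d_TV ≤ ℓ |p - q| ≤ √η`, and the other factors of
the bound are at least `1`; for the constant, `(2π)^{1/4} e^{1/24} 2^{-1/2} ≥ (π / 2)^{1/4}`.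
-/

open Finset

noncomputable def binomWeight (n i : ℕ) (p : ℝ) : ℝ :=
  n.choose i * p ^ i * (1 - p) ^ (n - i)

namespace binomWeight

variable {n i : ℕ} {p : ℝ}

lemma nonneg (hp : p ∈ Set.Icc (0 : ℝ) 1) : 0 ≤ binomWeight n i p := by
  have := hp.1
  have : 0 ≤ 1 - p := sub_nonneg.2 hp.2
  unfold binomWeight
  positivity

lemma eq_zero_of_lt (h : n < i) : binomWeight n i p = 0 := by
  simp [binomWeight, Nat.choose_eq_zero_of_lt h]

lemma sum_range (n : ℕ) (p : ℝ) : ∑ i ∈ range (n + 1), binomWeight n i p = 1 := by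
  have h := add_pow p (1 - p) n
  rw [add_sub_cancel, one_pow] at h
  rw [h]
  exact sum_congr rfl fun i _ => by unfold binomWeight; ring

lemma succ_zero : binomWeight (n + 1) 0 p = (1 - p) * binomWeight n 0 p := by
  simp [binomWeight, pow_succ]
  ring

lemma succ_succ :
    binomWeight (n + 1) (i + 1) p = (1 - p) * binomWeight n (i + 1) p + p * binomWeight n i p := by
  unfold binomWeight
  rw [Nat.choose_succ_succ', Nat.cast_add]
  rcases le_or_gt (i + 1) n with h | h
  · rw [show n + 1 - (i + 1) = n - (i + 1) + 1 by omega, show n - i = n - (i + 1) + 1 by omega]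
    ring
  · rw [Nat.choose_eq_zero_of_lt h, show n + 1 - (i + 1) = 0 by omega, show n - i = 0 by omega]
    ring

end binomWeight

section L1Distance

variable {n i : ℕ} {p q : ℝ}

lemma abs_binomWeight_succ_zero_sub_le (hp : p ∈ Set.Icc (0 : ℝ) 1)
    (hq : q ∈ Set.Icc (0 : ℝ) 1) :
    |binomWeight (n + 1) 0 p - binomWeight (n + 1) 0 q|
      ≤ (1 - p) * |binomWeight n 0 p - binomWeight n 0 q| + |p - q| * binomWeight n 0 q := by
  have h1p : 0 ≤ 1 - p := sub_nonneg.2 hp.2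
  rw [binomWeight.succ_zero, binomWeight.succ_zero]
  calc _ = |(1 - p) * (binomWeight n 0 p - binomWeight n 0 q) + (q - p) * binomWeight n 0 q| := by
          ring_nf
    _ ≤ _ := by
      refine (abs_add_le _ _).trans_eq ?_
      rw [abs_mul, abs_mul, abs_of_nonneg h1p, abs_of_nonneg (binomWeight.nonneg hq),
        abs_sub_comm q]

lemma abs_binomWeight_succ_succ_sub_le (hp : p ∈ Set.Icc (0 : ℝ) 1)
    (hq : q ∈ Set.Icc (0 : ℝ) 1) :
    |binomWeight (n + 1) (i + 1) p - binomWeight (n + 1) (i + 1) q|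
      ≤ (1 - p) * |binomWeight n (i + 1) p - binomWeight n (i + 1) q|
        + p * |binomWeight n i p - binomWeight n i q|
        + |p - q| * (binomWeight n (i + 1) q + binomWeight n i q) := by
  have h1p : 0 ≤ 1 - p := sub_nonneg.2 hp.2
  rw [binomWeight.succ_succ, binomWeight.succ_succ]
  calc _ = |(1 - p) * (binomWeight n (i + 1) p - binomWeight n (i + 1) q)
            + p * (binomWeight n i p - binomWeight n i q)
            + (q - p) * (binomWeight n (i + 1) q - binomWeight n i q)| := by ring_nf
    _ ≤ |(1 - p) * (binomWeight n (i + 1) p - binomWeight n (i + 1) q)|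
          + |p * (binomWeight n i p - binomWeight n i q)|
          + |(q - p) * (binomWeight n (i + 1) q - binomWeight n i q)| := abs_add_three _ _ _
    _ ≤ _ := by
      rw [abs_mul, abs_mul, abs_mul, abs_of_nonneg h1p, abs_of_nonneg hp.1, abs_sub_comm q]
      gcongr
      exact (abs_sub _ _).trans_eq <| by
        rw [abs_of_nonneg (binomWeight.nonneg hq), abs_of_nonneg (binomWeight.nonneg hq)]

lemma sum_abs_binomWeight_sub_succ_le (hp : p ∈ Set.Icc (0 : ℝ) 1)
    (hq : q ∈ Set.Icc (0 : ℝ) 1) :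
    ∑ i ∈ range (n + 2), |binomWeight (n + 1) i p - binomWeight (n + 1) i q|
      ≤ ∑ i ∈ range (n + 1), |binomWeight n i p - binomWeight n i q| + 2 * |p - q| := by
  set d : ℕ → ℝ := fun i => |binomWeight n i p - binomWeight n i q|
  set v : ℕ → ℝ := fun i => binomWeight n i q
  have hd : ∑ i ∈ range (n + 2), d i = ∑ i ∈ range (n + 1), d i := by
    simp [d, sum_range_succ _ (n + 1), binomWeight.eq_zero_of_lt (Nat.lt_succ_self n)]
  have hv : ∑ i ∈ range (n + 2), v i = 1 := by
    simp [v, sum_range_succ _ (n + 1), binomWeight.eq_zero_of_lt (Nat.lt_succ_self n),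
      binomWeight.sum_range]
  calc _ = ∑ i ∈ range (n + 1), |binomWeight (n + 1) (i + 1) p - binomWeight (n + 1) (i + 1) q|
          + |binomWeight (n + 1) 0 p - binomWeight (n + 1) 0 q| := sum_range_succ' _ _
    _ ≤ ∑ i ∈ range (n + 1), ((1 - p) * d (i + 1) + p * d i + |p - q| * (v (i + 1) + v i))
          + ((1 - p) * d 0 + |p - q| * v 0) := by
      gcongr with i
      · exact abs_binomWeight_succ_succ_sub_le hp hq
      · exact abs_binomWeight_succ_zero_sub_le hp hq
    _ = (1 - p) * ∑ i ∈ range (n + 2), d i + p * ∑ i ∈ range (n + 1), d i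
          + |p - q| * (∑ i ∈ range (n + 2), v i + ∑ i ∈ range (n + 1), v i) := by
      rw [sum_range_succ' d, sum_range_succ' v]
      simp only [sum_add_distrib, ← mul_sum]
      ring
    _ = _ := by
      rw [hd, hv, binomWeight.sum_range n q]
      ring

lemma sum_abs_binomWeight_sub_le (hp : p ∈ Set.Icc (0 : ℝ) 1)
    (hq : q ∈ Set.Icc (0 : ℝ) 1) :
    ∑ i ∈ range (n + 1), |binomWeight n i p - binomWeight n i q| ≤ 2 * n * |p - q| := by
  induction n with
  | zero => simp [binomWeight]
  | succ n ih =>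
    calc _ ≤ _ := sum_abs_binomWeight_sub_succ_le hp hq
      _ ≤ 2 * n * |p - q| + 2 * |p - q| := by gcongr
      _ = _ := by push_cast; ring

end L1Distance

lemma natCast_mul_abs_sub_le_sqrt (n : ℕ) (p q : ℝ) :
    n * |p - q| ≤ Real.sqrt ((p - q) ^ 2 * n * (n + 2)) := by
  rw [← Real.sqrt_sq (by positivity : (0 : ℝ) ≤ n * |p - q|)]
  gcongr
  rw [mul_pow, sq_abs]
  nlinarith [sq_nonneg (p - q), (Nat.cast_nonneg n : (0 : ℝ) ≤ n)]

open Real in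
lemma one_le_roos_constant :
    1 ≤ (2 * π) ^ ((1 : ℝ) / 4) * exp (1 / 24) * 2 ^ (-(1 : ℝ) / 2) := by
  have h2 : (2 : ℝ) ^ (-(1 : ℝ) / 2) = 4 ^ (-(1 : ℝ) / 4) := by
    rw [show (4 : ℝ) = 2 ^ (2 : ℝ) by norm_num, ← rpow_mul (by norm_num)]
    norm_num
  have hπ : 1 ≤ (2 * π) ^ ((1 : ℝ) / 4) * 4 ^ (-(1 : ℝ) / 4) := by
    rw [show -(1 : ℝ) / 4 = -(1 / 4) by ring, rpow_neg (by norm_num), ← div_eq_mul_inv,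
      ← div_rpow (by positivity) (by norm_num)]
    exact one_le_rpow ((one_le_div (by norm_num)).2 (by linarith [pi_gt_three])) (by norm_num)
  calc (1 : ℝ) ≤ (2 * π) ^ ((1 : ℝ) / 4) * 4 ^ (-(1 : ℝ) / 4) * exp (1 / 24) :=
        one_le_mul_of_one_le_of_one_le hπ (one_le_exp (by norm_num))
    _ = _ := by rw [h2]; ring

open Real in
theorem roos_binomial_tv
    (ℓ : ℕ) (p1 p2 : ℝ)
    (hp1 : p1 ∈ Set.Icc (0 : ℝ) 1) (hp2 : p2 ∈ Set.Icc (0 : ℝ) 1) :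
    (1 / 2) * ∑ i ∈ Finset.range (ℓ + 1),
        |(ℓ.choose i : ℝ) * p1 ^ i * (1 - p1) ^ (ℓ - i)
          - (ℓ.choose i : ℝ) * p2 ^ i * (1 - p2) ^ (ℓ - i)|
      ≤ ((2 * π) ^ ((1 : ℝ) / 4) * Real.exp (1 / 24) * 2 ^ (-(1 : ℝ) / 2))
          * Real.sqrt ((p1 - p2) ^ 2 * ℓ * (ℓ + 2))
          * (1 + Real.sqrt (2 * ((p1 - p2) ^ 2 * ℓ * (ℓ + 2))))
          * Real.exp (2 * ((p1 - p2) ^ 2 * ℓ * (ℓ + 2))) := by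
  set η := (p1 - p2) ^ 2 * ℓ * (ℓ + 2)
  calc (1 / 2) * ∑ i ∈ range (ℓ + 1), |binomWeight ℓ i p1 - binomWeight ℓ i p2|
      ≤ ℓ * |p1 - p2| := by linarith [sum_abs_binomWeight_sub_le (n := ℓ) hp1 hp2]
    _ ≤ Real.sqrt η := natCast_mul_abs_sub_le_sqrt ℓ p1 p2
    _ = 1 * Real.sqrt η * 1 * 1 := by ring
    _ ≤ _ := by
      gcongr
      · exact one_le_roos_constant
      · exact le_add_of_nonneg_right (Real.sqrt_nonneg _)
      · exact one_le_exp (by positivity)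
end

section
/- Let S be uniformly distributed over the C(p,k) subsets of {1,...,p} of size k, and let the observation vector Y = (Y^(1),...,Y^(n)) be generated conditionally independently given S via a fixed measurement matrix. For any estimator Ŝ of S from Y, and any auxiliary output distribution Q_Y on {0,1}, the error probability satisfies P[Ŝ ≠ S] ≥ Σ_s (1/C(p,k)) · P[ Σ_{i=1}^n log( P(Y^(i)|X_s^(i)) / Q_Y(Y^(i)) ) ≤ log C(p,k) + log δ | S = s ] − δ, for every δ > 0. -/
/-! The event in the bound says that the likelihood of `y` under `s` is at most `C(p,k) δ` times
its likelihood under the product measure `Q^n`. On that event, decoding is correct for at most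
one hypothesis, namely `est y`, so the correct-decoding mass there is at most `C(p,k) δ · Q^n(y)`;
summing over `y` and weighting by the uniform prior `1 / C(p,k)` leaves `δ`, and the rest of
the event is error mass. -/

open Finset

theorem prod_le_mul_prod_of_sum_log_div_le {ι : Type*} (s : Finset ι) {f g : ι → ℝ} {c : ℝ}
    (hf : ∀ i ∈ s, 0 ≤ f i) (hg : ∀ i ∈ s, 0 < g i) (hc : 0 < c)
    (h : ∑ i ∈ s, Real.log (f i / g i) ≤ Real.log c) :
    ∏ i ∈ s, f i ≤ c * ∏ i ∈ s, g i := by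
  have hg_prod : 0 < ∏ i ∈ s, g i := prod_pos hg
  by_cases hzero : ∃ i ∈ s, f i = 0
  · obtain ⟨i, hi, hfi⟩ := hzero
    rw [prod_eq_zero hi hfi]
    positivity
  push Not at hzero
  have hf_pos : ∀ i ∈ s, 0 < f i := fun i hi => (hf i hi).lt_of_ne (hzero i hi).symm
  rw [← Real.log_prod fun i hi => (div_pos (hf_pos i hi) (hg i hi)).ne', prod_div_distrib,
    Real.log_le_log_iff (div_pos (prod_pos hf_pos) hg_prod) hc, div_le_iff₀ hg_prod] at h
  exact h

theorem mul_indicator_le_error_add_correct {σ : Type*} [DecidableEq σ] {P q c : ℝ} {s e : σ}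
    {A : Prop} [Decidable A] (hP : 0 ≤ P) (hcq : 0 ≤ c * q) (hA : A → P ≤ c * q) :
    P * (if A then 1 else 0) ≤ P * (if e ≠ s then 1 else 0) + c * q * (if s = e then 1 else 0) := by
  by_cases hse : s = e
  · subst hse
    split_ifs <;> simp_all
  · have hes : e ≠ s := Ne.symm hse
    split_ifs <;> simp_all

theorem sum_sum_mul_indicator_le_error_add {σ Y : Type*} [Fintype Y] [DecidableEq σ]
    (T : Finset σ) (P : σ → Y → ℝ) (Q : Y → ℝ) (est : Y → σ) (A : σ → Y → Prop)
    [∀ s y, Decidable (A s y)] {c : ℝ} (hP : ∀ s y, 0 ≤ P s y) (hQ : ∀ y, 0 ≤ Q y) (hc : 0 ≤ c)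
    (hA : ∀ s y, A s y → P s y ≤ c * Q y) :
    ∑ s ∈ T, ∑ y, P s y * (if A s y then 1 else 0)
      ≤ ∑ s ∈ T, ∑ y, P s y * (if est y ≠ s then 1 else 0) + c * ∑ y, Q y := by
  have hcorrect : ∀ y, ∑ s ∈ T, c * Q y * (if s = est y then 1 else 0) ≤ c * Q y := by
    intro y
    rw [← mul_sum, sum_ite_eq']
    split_ifs <;> simp [mul_nonneg hc (hQ y)]
  calc ∑ s ∈ T, ∑ y, P s y * (if A s y then 1 else 0)
      ≤ ∑ s ∈ T, ∑ y, (P s y * (if est y ≠ s then 1 else 0)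
          + c * Q y * (if s = est y then 1 else 0)) :=
        sum_le_sum fun s _ => sum_le_sum fun y _ =>
          mul_indicator_le_error_add_correct (hP s y) (mul_nonneg hc (hQ y)) (hA s y)
    _ = ∑ s ∈ T, ∑ y, P s y * (if est y ≠ s then 1 else 0)
          + ∑ y, ∑ s ∈ T, c * Q y * (if s = est y then 1 else 0) := by
        rw [sum_congr rfl fun s _ => sum_add_distrib, sum_add_distrib, add_right_inj]
        exact sum_comm
    _ ≤ _ := by
        rw [mul_sum]
        gcongr with y
        exact hcorrect y

theorem group_testing_converse_bound_general
    (p k n : ℕ) (hk : k ≤ p)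
    (W : Fin n → Finset (Fin p) → Bool → ℝ)
    (Q : Bool → ℝ)
    (hW0 : ∀ i s y, 0 ≤ W i s y)
    (hQ0 : ∀ y, 0 < Q y) (hQ1 : ∑ y, Q y = 1)
    (est : (Fin n → Bool) → Finset (Fin p))
    (δ : ℝ) (hδ : 0 < δ) :
    ∑ s ∈ Finset.univ.powersetCard k, (1 / (p.choose k : ℝ)) *
        ∑ y : Fin n → Bool, (∏ i, W i s (y i)) * (if est y ≠ s then 1 else 0)
      ≥ (∑ s ∈ Finset.univ.powersetCard k, (1 / (p.choose k : ℝ)) *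
          ∑ y : Fin n → Bool, (∏ i, W i s (y i)) *
            (if (∑ i, Real.log (W i s (y i) / Q (y i)))
                ≤ Real.log (p.choose k : ℝ) + Real.log δ then 1 else 0))
        - δ := by
  have hM : (0 : ℝ) < p.choose k := by exact_mod_cast Nat.choose_pos hk
  have hQ_prod : ∑ y : Fin n → Bool, ∏ i, Q (y i) = 1 := by
    rw [← Fintype.prod_sum fun (_ : Fin n) b => Q b, hQ1, prod_const_one]
  have hchange := sum_sum_mul_indicator_le_error_add (univ.powersetCard k)
    (fun s y => ∏ i, W i s (y i)) (fun y => ∏ i, Q (y i)) est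
    (fun s y => ∑ i, Real.log (W i s (y i) / Q (y i)) ≤ Real.log (p.choose k) + Real.log δ)
    (fun s y => prod_nonneg fun i _ => hW0 i s (y i)) (fun y => (prod_pos fun i _ => hQ0 _).le)
    (mul_pos hM hδ).le fun s y hA => prod_le_mul_prod_of_sum_log_div_le univ
      (fun i _ => hW0 i s (y i)) (fun i _ => hQ0 _) (mul_pos hM hδ)
      (by rwa [Real.log_mul hM.ne' hδ.ne'])
  rw [hQ_prod, mul_one] at hchange
  rw [← mul_sum, ← mul_sum, ge_iff_le, sub_le_iff_le_add]
  calc 1 / (p.choose k : ℝ) * _ ≤ 1 / (p.choose k : ℝ) * (_ + p.choose k * δ) := by gcongr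
    _ = _ := by field_simp

theorem group_testing_converse_bound
    (p k n : ℕ) (hk : k ≤ p)
    (W : Fin n → Finset (Fin p) → Bool → ℝ)
    (Q : Bool → ℝ)
    (hW0 : ∀ i s y, 0 ≤ W i s y) (hW1 : ∀ i s, ∑ y, W i s y = 1)
    (hQ0 : ∀ y, 0 < Q y) (hQ1 : ∑ y, Q y = 1)
    (est : (Fin n → Bool) → Finset (Fin p))
    (δ : ℝ) (hδ : 0 < δ) :
    ∑ s ∈ Finset.univ.powersetCard k, (1 / (p.choose k : ℝ)) *
        ∑ y : Fin n → Bool, (∏ i, W i s (y i)) * (if est y ≠ s then 1 else 0)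
      ≥ (∑ s ∈ Finset.univ.powersetCard k, (1 / (p.choose k : ℝ)) *
          ∑ y : Fin n → Bool, (∏ i, W i s (y i)) *
            (if (∑ i, Real.log (W i s (y i) / Q (y i)))
                ≤ Real.log (p.choose k : ℝ) + Real.log δ then 1 else 0))
        - δ :=
  group_testing_converse_bound_general p k n hk W Q hW0 hQ0 hQ1 est δ hδ
end

section
/- Let S_dif and S_eq be as in the genie-aided group testing setup (S_eq uniform over (k−ℓ)-subsets of {1,...,p}, S_dif uniform over ℓ-subsets of the complement), and let Y = (Y^(1),...,Y^(n)) be conditionally independent observations given (S_dif, S_eq), with each Y^(i) depending on (S_dif, S_eq) only through the counts V_dif^(i) = Σ_{j∈S_dif} X_j^(i) and V_eq^(i) = Σ_{j∈S_eq} X_j^(i) for a fixed matrix X. Then I(S_dif; Y | S_eq) ≤ Σ_{i=1}^n I(V_dif^(i); Y^(i) | V_eq^(i)). -/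
/-!
Write I(S_dif; Y | S_eq) = H(Y | S_eq) − H(Y | S_dif, S_eq). Given both sets the tests are
independent and the i-th one only sees the counts, so H(Y | S_dif, S_eq) is exactly
∑ᵢ H(Y⁽ⁱ⁾ | V_dif⁽ⁱ⁾, V_eq⁽ⁱ⁾). For the other term, Gibbs' inequality against the product of the
conditional laws of Y⁽ⁱ⁾ given V_eq⁽ⁱ⁾ gives H(Y | S_eq) ≤ ∑ᵢ H(Y⁽ⁱ⁾ | V_eq⁽ⁱ⁾).
-/

/-- Conditional mutual information I(A;B|C) (in nats) of a joint pmf `q` on A × B × C: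
∑ q(a,b,c) log( q(a,b,c) q(c) / (q(a,c) q(b,c)) ). -/
noncomputable def condMI {A B C : Type*} [Fintype A] [Fintype B] [Fintype C]
    (q : A → B → C → ℝ) : ℝ :=
  ∑ a, ∑ b, ∑ c, q a b c *
    Real.log (q a b c * (∑ a', ∑ b', q a' b' c)
      / ((∑ b', q a b' c) * (∑ a', q a' b c)))

/-- Prior of the genie-aided setup: (S_dif, S_eq) uniform over pairs of disjoint subsets of
{1,...,p} with |S_dif| = ℓ and |S_eq| = k − ℓ. -/
noncomputable def genieP (p k ℓ : ℕ) (sd se : Finset (Fin p)) : ℝ :=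
  if sd.card = ℓ ∧ se.card = k - ℓ ∧ Disjoint sd se then
    1 / ((p.choose (k - ℓ) : ℝ) * ((p - (k - ℓ)).choose ℓ : ℝ))
  else 0

/-- Joint pmf of (S_dif, Y, S_eq): the n tests are conditionally independent given the sets,
the i-th observation Y_i depending on them only through the counts
V_dif^(i) = ∑_{j∈S_dif} X_ij and V_eq^(i) = ∑_{j∈S_eq} X_ij, via the channel W i. -/
noncomputable def genieJoint (p k ℓ n : ℕ) (X : Fin n → Fin p → Bool)
    (W : Fin n → ℕ → ℕ → Bool → ℝ)
    (sd : Finset (Fin p)) (y : Fin n → Bool) (se : Finset (Fin p)) : ℝ :=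
  genieP p k ℓ sd se *
    ∏ i, W i ((sd.filter fun j => X i j = true).card)
            ((se.filter fun j => X i j = true).card) (y i)

/-- Joint pmf of (V_dif^(i), Y^(i), V_eq^(i)) for a single test i. -/
noncomputable def genieJointI (p k ℓ n : ℕ) (X : Fin n → Fin p → Bool)
    (W : Fin n → ℕ → ℕ → Bool → ℝ) (i : Fin n)
    (a : Fin (p + 1)) (y : Bool) (c : Fin (p + 1)) : ℝ :=
  (∑ sd : Finset (Fin p), ∑ se : Finset (Fin p),
      if (sd.filter fun j => X i j = true).card = (a : ℕ)
          ∧ (se.filter fun j => X i j = true).card = (c : ℕ) then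
        genieP p k ℓ sd se
      else 0)
    * W i (a : ℕ) (c : ℕ) y

open Real Finset

theorem sub_le_mul_log_div {x y : ℝ} (hx : 0 ≤ x) (hy : 0 ≤ y) (hxy : 0 < x → 0 < y) :
    x - y ≤ x * log (x / y) := by
  rcases hx.eq_or_lt with rfl | hx
  · simpa using hy
  have h := mul_le_mul_of_nonneg_left (one_sub_inv_le_log_of_pos (div_pos hx (hxy hx))) hx.le
  rwa [inv_div, mul_sub, mul_one, mul_div_cancel₀ _ hx.ne'] at h

section ProductLaws

variable {ι β : Type*} [Fintype ι] [DecidableEq ι] [Fintype β]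

theorem sum_prod_mul_apply (f : ι → β → ℝ) (hf : ∀ j, ∑ b, f j b = 1) (i : ι) (g : β → ℝ) :
    ∑ y : ι → β, (∏ j, f j (y j)) * g (y i) = ∑ b, f i b * g b := by
  have factor : ∀ y : ι → β, (∏ j, f j (y j)) * g (y i)
      = ∏ j, f j (y j) * (if j = i then g (y j) else 1) := fun y => by
    rw [prod_mul_distrib, prod_ite_eq' univ i, if_pos (mem_univ i)]
  simp only [factor]
  rw [← Fintype.prod_sum fun j b => f j b * if j = i then g b else 1,
    prod_eq_single i (fun j _ hj => by simp [hj, hf j]) (by simp)]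
  simp

theorem sum_prod_eq_one (f : ι → β → ℝ) (hf : ∀ j, ∑ b, f j b = 1) :
    ∑ y : ι → β, ∏ j, f j (y j) = 1 := by
  simp [← Fintype.prod_sum, hf]

theorem sum_negMulLog_prod (f : ι → β → ℝ) (hf : ∀ j, ∑ b, f j b = 1) :
    ∑ y : ι → β, negMulLog (∏ j, f j (y j)) = ∑ i, ∑ b, negMulLog (f i b) := by
  have expand : ∀ y : ι → β,
      negMulLog (∏ j, f j (y j)) = ∑ i, (∏ j, f j (y j)) * -log (f i (y i)) := fun y => by
    by_cases h : ∀ j, f j (y j) ≠ 0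
    · rw [negMulLog, log_prod fun j _ => h j, ← mul_sum, sum_neg_distrib]
      ring
    obtain ⟨j, hj⟩ := not_forall_not.mp h
    simp [prod_eq_zero (f := fun j => f j (y j)) (mem_univ j) hj]
  simp only [expand]
  rw [sum_comm]
  refine sum_congr rfl fun i _ => ?_
  rw [sum_prod_mul_apply f hf i fun b => -log (f i b)]
  simp only [negMulLog, neg_mul, mul_neg]

end ProductLaws

section CondEntropy

variable {ι A B C β : Type*} [Fintype B]

noncomputable def condProb (r : B → C → ℝ) (b : B) (c : C) : ℝ :=
  r b c / ∑ b', r b' c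

theorem condProb_nonneg {r : B → C → ℝ} (hr : ∀ b c, 0 ≤ r b c) (b : B) (c : C) :
    0 ≤ condProb r b c :=
  div_nonneg (hr b c) (sum_nonneg fun b' _ => hr b' c)

theorem sum_condProb_le_one (r : B → C → ℝ) (c : C) :
    ∑ b, condProb r b c ≤ 1 := by
  simp only [condProb, ← sum_div]
  exact div_self_le_one _

theorem condProb_pos {r : B → C → ℝ} (hr : ∀ b c, 0 ≤ r b c) {b : B} {c : C}
    (h : 0 < r b c) : 0 < condProb r b c :=
  div_pos h (h.trans_le (single_le_sum (fun b' _ => hr b' c) (mem_univ b)))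

variable [Fintype C]

/-- H(B | C) for the joint law `r` of (B, C). -/
noncomputable def condEntropy (r : B → C → ℝ) : ℝ :=
  ∑ b, ∑ c, r b c * log ((∑ b', r b' c) / r b c)

theorem condEntropy_eq_sum_mul_neg_log_condProb (r : B → C → ℝ) :
    condEntropy r = ∑ b, ∑ c, r b c * -log (condProb r b c) := by
  simp only [condEntropy, condProb, ← log_inv, inv_div]

theorem condMI_eq_condEntropy_sub_condEntropy [Fintype A] (q : A → B → C → ℝ)
    (hq : ∀ a b c, 0 ≤ q a b c) :
    condMI q = condEntropy (fun b c => ∑ a, q a b c)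
      - condEntropy (fun b (x : A × C) => q x.1 b x.2) := by
  have pointwise : ∀ a b c, q a b c *
      log (q a b c * (∑ a', ∑ b', q a' b' c) / ((∑ b', q a b' c) * (∑ a', q a' b c)))
      = q a b c * log ((∑ b', ∑ a', q a' b' c) / ∑ a', q a' b c)
        - q a b c * log ((∑ b', q a b' c) / q a b c) := by
    intro a b c
    rcases (hq a b c).eq_or_lt with h | h
    · simp [← h]
    have hac : 0 < ∑ b', q a b' c :=
      h.trans_le (single_le_sum (fun b' _ => hq a b' c) (mem_univ b))
    have hbc : 0 < ∑ a', q a' b c :=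
      h.trans_le (single_le_sum (fun a' _ => hq a' b c) (mem_univ a))
    have hc : 0 < ∑ a', ∑ b', q a' b' c :=
      hac.trans_le (single_le_sum (f := fun a' => ∑ b', q a' b' c)
        (fun a' _ => sum_nonneg fun b' _ => hq a' b' c) (mem_univ a))
    rw [sum_comm (s := univ (α := B))]
    rw [log_div (by positivity) (by positivity), log_div (by positivity) (by positivity),
      log_div (by positivity) (by positivity), log_mul (by positivity) (by positivity),
      log_mul (by positivity) (by positivity)]
    ring
  simp only [condMI, pointwise, sum_sub_distrib]
  simp only [condEntropy, Fintype.sum_prod_type, sum_mul]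
  congr 1
  · rw [sum_comm]
    exact sum_congr rfl fun _ _ => sum_comm
  · exact sum_comm

theorem condEntropy_le_sum_mul_neg_log (r κ : B → C → ℝ) (hr : ∀ b c, 0 ≤ r b c)
    (hκ : ∀ b c, 0 ≤ κ b c) (hκ1 : ∀ c, ∑ b, κ b c ≤ 1)
    (hsupp : ∀ b c, 0 < r b c → 0 < κ b c) :
    condEntropy r ≤ ∑ b, ∑ c, r b c * -log (κ b c) := by
  set m : C → ℝ := fun c => ∑ b, r b c
  have hm : ∀ c, 0 ≤ m c := fun c => sum_nonneg fun b _ => hr b c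
  have pointwise : ∀ b c,
      r b c * log (m c / r b c) ≤ r b c * -log (κ b c) + (m c * κ b c - r b c) := by
    intro b c
    rcases (hr b c).eq_or_lt with h | h
    · simpa [← h] using mul_nonneg (hm c) (hκ b c)
    have hmc : 0 < m c := h.trans_le (single_le_sum (fun b' _ => hr b' c) (mem_univ b))
    have hκbc := hsupp b c h
    have gibbs := sub_le_mul_log_div (hr b c) (mul_nonneg (hm c) (hκ b c))
      fun _ => mul_pos hmc hκbc
    rw [log_div h.ne' (by positivity), log_mul hmc.ne' hκbc.ne'] at gibbs
    rw [log_div hmc.ne' h.ne']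
    linarith
  have slack : ∑ b, ∑ c, (m c * κ b c - r b c) ≤ 0 := by
    rw [sum_comm]
    refine sum_nonpos fun c _ => ?_
    rw [sum_sub_distrib, ← mul_sum]
    nlinarith [hm c, hκ1 c]
  calc condEntropy r
      ≤ ∑ b, ∑ c, (r b c * -log (κ b c) + (m c * κ b c - r b c)) :=
        sum_le_sum fun b _ => sum_le_sum fun c _ => pointwise b c
    _ ≤ ∑ b, ∑ c, r b c * -log (κ b c) := by
        simp only [sum_add_distrib]
        linarith

theorem condEntropy_le_sum_mul_neg_log_prod [Fintype ι] [DecidableEq ι] [Fintype β]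
    (r : (ι → β) → C → ℝ) (ρ : ι → β → C → ℝ) (hr : ∀ y c, 0 ≤ r y c)
    (hρ : ∀ i b c, 0 ≤ ρ i b c) (hρ1 : ∀ i c, ∑ b, ρ i b c ≤ 1)
    (hsupp : ∀ y c, 0 < r y c → ∀ i, 0 < ρ i (y i) c) :
    condEntropy r ≤ ∑ i, ∑ y, ∑ c, r y c * -log (ρ i (y i) c) := by
  have hκ1 : ∀ c, ∑ y : ι → β, ∏ i, ρ i (y i) c ≤ 1 := fun c => by
    rw [← Fintype.prod_sum fun i b => ρ i b c]
    exact prod_le_one (fun i _ => sum_nonneg fun b _ => hρ i b c) fun i _ => hρ1 i c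
  have log_prod_eq : ∀ y c, r y c * -log (∏ i, ρ i (y i) c)
      = ∑ i, r y c * -log (ρ i (y i) c) := fun y c => by
    rcases (hr y c).eq_or_lt with h | h
    · simp [← h]
    rw [log_prod fun i _ => (hsupp y c h i).ne', ← mul_sum, sum_neg_distrib]
  calc condEntropy r ≤ ∑ y, ∑ c, r y c * -log (∏ i, ρ i (y i) c) :=
        condEntropy_le_sum_mul_neg_log r _ hr (fun y c => prod_nonneg fun i _ => hρ i _ c) hκ1
          fun y c h => prod_pos fun i _ => hsupp y c h i
    _ = ∑ y, ∑ i, ∑ c, r y c * -log (ρ i (y i) c) := by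
        simp only [log_prod_eq]
        exact sum_congr rfl fun _ _ => sum_comm
    _ = ∑ i, ∑ y, ∑ c, r y c * -log (ρ i (y i) c) := sum_comm

theorem condEntropy_mul_of_sum_eq_one (m : C → ℝ) (w : C → B → ℝ)
    (hw : ∀ c, ∑ b, w c b = 1) :
    condEntropy (fun b c => m c * w c b) = ∑ c, m c * ∑ b, negMulLog (w c b) := by
  have pointwise : ∀ b c, m c * w c b * log ((∑ b', m c * w c b') / (m c * w c b))
      = m c * negMulLog (w c b) := fun b c => by
    rw [← mul_sum, hw, mul_one]
    rcases eq_or_ne (m c) 0 with hm | hm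
    · simp [hm]
    rcases eq_or_ne (w c b) 0 with hwb | hwb
    · simp [hwb]
    rw [div_mul_cancel_left₀ hm, log_inv, negMulLog]
    ring
  simp only [condEntropy, pointwise, mul_sum]
  exact sum_comm

end CondEntropy

section Memoryless

variable {ι A C A' C' β : Type*}

noncomputable def memorylessJoint [Fintype ι] (P : A → C → ℝ) (φ : ι → A → A') (ψ : ι → C → C')
    (W : ι → A' → C' → β → ℝ) (a : A) (y : ι → β) (c : C) : ℝ :=
  P a c * ∏ i, W i (φ i a) (ψ i c) (y i)

theorem memorylessJoint_nonneg [Fintype ι] {P : A → C → ℝ} {W : ι → A' → C' → β → ℝ}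
    {φ : ι → A → A'} {ψ : ι → C → C'} (hP : ∀ a c, 0 ≤ P a c)
    (hW0 : ∀ i a' c' b, 0 ≤ W i a' c' b) (a : A) (y : ι → β) (c : C) :
    0 ≤ memorylessJoint P φ ψ W a y c :=
  mul_nonneg (hP a c) (prod_nonneg fun _ _ => hW0 _ _ _ _)

variable [Fintype A] [Fintype C] [DecidableEq A'] [DecidableEq C']

noncomputable def letterWeight (P : A → C → ℝ) (φ : A → A') (ψ : C → C') (a' : A') (c' : C') :
    ℝ :=
  ∑ a, ∑ c, if φ a = a' ∧ ψ c = c' then P a c else 0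

theorem sum_sum_letterWeight_mul [Fintype A'] [Fintype C'] (P : A → C → ℝ) (φ : A → A')
    (ψ : C → C') (F : A' → C' → ℝ) :
    ∑ a', ∑ c', letterWeight P φ ψ a' c' * F a' c' = ∑ a, ∑ c, P a c * F (φ a) (ψ c) := by
  simp only [letterWeight, sum_mul, ite_mul, zero_mul]
  conv_lhs => enter [2, a']; rw [sum_comm]
  rw [sum_comm]
  refine sum_congr rfl fun a _ => ?_
  simp only [ite_and, sum_ite_irrel, sum_const_zero, sum_ite_eq, mem_univ, if_true]
  rw [sum_comm]
  simp

theorem le_letterWeight {P : A → C → ℝ} (hP : ∀ a c, 0 ≤ P a c) (φ : A → A') (ψ : C → C')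
    (a : A) (c : C) : P a c ≤ letterWeight P φ ψ (φ a) (ψ c) := by
  have hterm : ∀ a₀ c₀, 0 ≤ if φ a₀ = φ a ∧ ψ c₀ = ψ c then P a₀ c₀ else 0 :=
    fun a₀ c₀ => by split <;> simp [hP]
  calc P a c = if φ a = φ a ∧ ψ c = ψ c then P a c else 0 := by simp
    _ ≤ ∑ c₀, if φ a = φ a ∧ ψ c₀ = ψ c then P a c₀ else 0 :=
        single_le_sum (f := fun c₀ => _) (fun c₀ _ => hterm a c₀) (mem_univ c)
    _ ≤ letterWeight P φ ψ (φ a) (ψ c) :=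
        single_le_sum (f := fun a₀ => ∑ c₀, _) (fun a₀ _ => sum_nonneg fun c₀ _ => hterm a₀ c₀)
          (mem_univ a)

theorem letterWeight_nonneg {P : A → C → ℝ} (hP : ∀ a c, 0 ≤ P a c) (φ : A → A') (ψ : C → C')
    (a' : A') (c' : C') : 0 ≤ letterWeight P φ ψ a' c' :=
  sum_nonneg fun a _ => sum_nonneg fun c _ => by split <;> simp [hP]

/-- The law of (φ i A, Y i, ψ i C) when (A, Y, C) has law `memorylessJoint P φ ψ W`. -/
noncomputable def letterJoint (P : A → C → ℝ) (φ : ι → A → A') (ψ : ι → C → C')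
    (W : ι → A' → C' → β → ℝ) (i : ι) (a' : A') (b : β) (c' : C') : ℝ :=
  letterWeight P (φ i) (ψ i) a' c' * W i a' c' b

variable {P : A → C → ℝ} {W : ι → A' → C' → β → ℝ}

theorem letterJoint_nonneg {φ : ι → A → A'} {ψ : ι → C → C'} (hP : ∀ a c, 0 ≤ P a c)
    (hW0 : ∀ i a' c' b, 0 ≤ W i a' c' b) (i : ι) (a' : A') (b : β) (c' : C') :
    0 ≤ letterJoint P φ ψ W i a' b c' :=
  mul_nonneg (letterWeight_nonneg hP _ _ a' c') (hW0 i a' c' b)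

theorem letterJoint_pos_of_memorylessJoint_pos [Fintype ι] {φ : ι → A → A'} {ψ : ι → C → C'}
    (hP : ∀ a c, 0 ≤ P a c) (hW0 : ∀ i a' c' b, 0 ≤ W i a' c' b) {a : A} {y : ι → β} {c : C}
    (h : 0 < memorylessJoint P φ ψ W a y c) (i : ι) :
    0 < letterJoint P φ ψ W i (φ i a) (y i) (ψ i c) := by
  have hPac : 0 < P a c := pos_of_mul_pos_left h (prod_nonneg fun i _ => hW0 _ _ _ _)
  have hWi : 0 < W i (φ i a) (ψ i c) (y i) := (hW0 _ _ _ _).lt_of_ne fun h0 => by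
    simp [memorylessJoint, prod_eq_zero (f := fun i => W i (φ i a) (ψ i c) (y i)) (mem_univ i)
      h0.symm] at h
  exact mul_pos (hPac.trans_le (le_letterWeight hP _ _ a c)) hWi

variable [Fintype ι] [DecidableEq ι] [Fintype β] [Fintype A'] [Fintype C']

theorem sum_sum_marginal_memorylessJoint_mul (hW1 : ∀ i a' c', ∑ b, W i a' c' b = 1)
    (φ : ι → A → A') (ψ : ι → C → C') (i : ι) (G : β → C' → ℝ) :
    ∑ y, ∑ c, (∑ a, memorylessJoint P φ ψ W a y c) * G (y i) (ψ i c)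
      = ∑ b, ∑ c', (∑ a', letterJoint P φ ψ W i a' b c') * G b c' := by
  calc ∑ y, ∑ c, (∑ a, memorylessJoint P φ ψ W a y c) * G (y i) (ψ i c)
      = ∑ a, ∑ c, P a c * ∑ b, W i (φ i a) (ψ i c) b * G b (ψ i c) := by
        simp only [memorylessJoint, sum_mul, mul_assoc]
        refine (sum_congr rfl fun _ _ => sum_comm).trans ?_
        rw [sum_comm]
        refine sum_congr rfl fun a _ => ?_
        rw [sum_comm]
        refine sum_congr rfl fun c _ => ?_
        rw [← mul_sum, sum_prod_mul_apply (fun j b => W j (φ j a) (ψ j c) b)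
          (fun j => hW1 j _ _) i fun b => G b (ψ i c)]
    _ = ∑ a', ∑ c', letterWeight P (φ i) (ψ i) a' c' * ∑ b, W i a' c' b * G b c' :=
        (sum_sum_letterWeight_mul P (φ i) (ψ i) fun a' c' => ∑ b, W i a' c' b * G b c').symm
    _ = ∑ b, ∑ c', (∑ a', letterJoint P φ ψ W i a' b c') * G b c' := by
        simp only [letterJoint, sum_mul, mul_sum, mul_assoc]
        refine (sum_congr rfl fun _ _ => sum_comm).trans ?_
        rw [sum_comm]
        exact sum_congr rfl fun _ _ => sum_comm

theorem condEntropy_memorylessJoint_given_both (hW1 : ∀ i a' c', ∑ b, W i a' c' b = 1)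
    (φ : ι → A → A') (ψ : ι → C → C') :
    condEntropy (fun y (x : A × C) => memorylessJoint P φ ψ W x.1 y x.2)
      = ∑ i, condEntropy (fun b (x : A' × C') => letterJoint P φ ψ W i x.1 b x.2) := by
  have letter : ∀ i, condEntropy (fun b (x : A' × C') => letterJoint P φ ψ W i x.1 b x.2)
      = ∑ a, ∑ c, P a c * ∑ b, negMulLog (W i (φ i a) (ψ i c) b) := fun i => by
    refine (condEntropy_mul_of_sum_eq_one
      (fun x : A' × C' => letterWeight P (φ i) (ψ i) x.1 x.2) (fun x b => W i x.1 x.2 b)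
      (fun x => hW1 i _ _)).trans ?_
    rw [Fintype.sum_prod_type, sum_sum_letterWeight_mul]
  refine (condEntropy_mul_of_sum_eq_one (fun x : A × C => P x.1 x.2)
    (fun x (y : ι → β) => ∏ i, W i (φ i x.1) (ψ i x.2) (y i))
    (fun x => sum_prod_eq_one _ fun i => hW1 i _ _)).trans ?_
  simp only [letter, sum_negMulLog_prod _ fun i => hW1 i _ _, Fintype.sum_prod_type, mul_sum]
  conv_rhs => rw [sum_comm]
  exact sum_congr rfl fun a _ => sum_comm

theorem condEntropy_marginal_memorylessJoint_le (hP : ∀ a c, 0 ≤ P a c)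
    (hW0 : ∀ i a' c' b, 0 ≤ W i a' c' b) (hW1 : ∀ i a' c', ∑ b, W i a' c' b = 1)
    (φ : ι → A → A') (ψ : ι → C → C') :
    condEntropy (fun y c => ∑ a, memorylessJoint P φ ψ W a y c)
      ≤ ∑ i, condEntropy (fun b c' => ∑ a', letterJoint P φ ψ W i a' b c') := by
  set r : ι → β → C' → ℝ := fun i b c' => ∑ a', letterJoint P φ ψ W i a' b c'
  have hr : ∀ i b c', 0 ≤ r i b c' :=
    fun i b c' => sum_nonneg fun a' _ => letterJoint_nonneg hP hW0 i a' b c'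
  have hsupp : ∀ y c, 0 < ∑ a, memorylessJoint P φ ψ W a y c →
      ∀ i, 0 < condProb (r i) (y i) (ψ i c) := by
    intro y c h i
    have h' : ∑ _a : A, (0 : ℝ) < ∑ a, memorylessJoint P φ ψ W a y c := by simpa using h
    obtain ⟨a, -, ha⟩ := exists_lt_of_sum_lt h'
    refine condProb_pos (hr i) ?_
    exact (letterJoint_pos_of_memorylessJoint_pos hP hW0 ha i).trans_le
      (single_le_sum (fun a' _ => letterJoint_nonneg hP hW0 i a' _ _) (mem_univ _))
  calc _ ≤ ∑ i, ∑ y, ∑ c,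
        (∑ a, memorylessJoint P φ ψ W a y c) * -log (condProb (r i) (y i) (ψ i c)) :=
        condEntropy_le_sum_mul_neg_log_prod _ (fun i b c => condProb (r i) b (ψ i c))
          (fun y c => sum_nonneg fun a _ => memorylessJoint_nonneg hP hW0 a y c)
          (fun i b c => condProb_nonneg (hr i) _ _) (fun i c => sum_condProb_le_one _ _) hsupp
    _ = _ := sum_congr rfl fun i _ =>
        (sum_sum_marginal_memorylessJoint_mul hW1 φ ψ i
          fun b c' => -log (condProb (r i) b c')).trans
            (condEntropy_eq_sum_mul_neg_log_condProb (r i)).symm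

theorem condMI_memorylessJoint_le_sum_condMI_letterJoint (hP : ∀ a c, 0 ≤ P a c)
    (hW0 : ∀ i a' c' b, 0 ≤ W i a' c' b) (hW1 : ∀ i a' c', ∑ b, W i a' c' b = 1)
    (φ : ι → A → A') (ψ : ι → C → C') :
    condMI (memorylessJoint P φ ψ W) ≤ ∑ i, condMI (letterJoint P φ ψ W i) := by
  rw [condMI_eq_condEntropy_sub_condEntropy _ (memorylessJoint_nonneg hP hW0),
    condEntropy_memorylessJoint_given_both hW1]
  simp only [condMI_eq_condEntropy_sub_condEntropy _ (letterJoint_nonneg hP hW0 _),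
    sum_sub_distrib]
  linarith [condEntropy_marginal_memorylessJoint_le hP hW0 hW1 φ ψ]

end Memoryless

theorem genieP_nonneg (p k ℓ : ℕ) (sd se : Finset (Fin p)) : 0 ≤ genieP p k ℓ sd se := by
  unfold genieP
  split <;> positivity

theorem genie_mutual_info_single_letter_bound_general
    (p k ℓ n : ℕ)
    (X : Fin n → Fin p → Bool)
    (W : Fin n → ℕ → ℕ → Bool → ℝ)
    (hW0 : ∀ i a c y, 0 ≤ W i a c y) (hW1 : ∀ i a c, ∑ y, W i a c y = 1) :
    condMI (genieJoint p k ℓ n X W)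
      ≤ ∑ i, condMI (genieJointI p k ℓ n X W i) := by
  let count : Fin n → Finset (Fin p) → Fin (p + 1) := fun i s =>
    ⟨(s.filter fun j => X i j = true).card,
      Nat.lt_succ_of_le <| (card_filter_le _ _).trans <| by simpa using card_le_univ s⟩
  let W' : Fin n → Fin (p + 1) → Fin (p + 1) → Bool → ℝ := fun i a c => W i a c
  have letter : ∀ i,
      genieJointI p k ℓ n X W i = letterJoint (genieP p k ℓ) count count W' i := by
    intro i
    ext a y c
    simp only [genieJointI, letterJoint, letterWeight, count, W', Fin.ext_iff]
  have joint : genieJoint p k ℓ n X W = memorylessJoint (genieP p k ℓ) count count W' := rfl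
  rw [joint]
  simp only [letter]
  exact condMI_memorylessJoint_le_sum_condMI_letterJoint (W := W') (genieP_nonneg p k ℓ)
    (fun i _ _ => hW0 i _ _) (fun i _ _ => hW1 i _ _) count count

theorem genie_mutual_info_single_letter_bound
    (p k ℓ n : ℕ) (hl1 : 1 ≤ ℓ) (hlk : ℓ ≤ k) (hkp : k ≤ p)
    (X : Fin n → Fin p → Bool)
    (W : Fin n → ℕ → ℕ → Bool → ℝ)
    (hW0 : ∀ i a c y, 0 ≤ W i a c y) (hW1 : ∀ i a c, ∑ y, W i a c y = 1) :
    condMI (genieJoint p k ℓ n X W)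
      ≤ ∑ i, condMI (genieJointI p k ℓ n X W i) :=
  genie_mutual_info_single_letter_bound_general p k ℓ n X W hW0 hW1
end
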